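/- arXiv:2306.09213 — 9 statements merged into one kernel-verified Lean document; each statement's English description precedes it below -/
import Mathlib

section
/- Let f : (r_e, r_c) → ℝ be any function and for r ∈ (r_e, r_c) set Φ'(r) = b(r²+a²)f(r)/μ(r) and Ψ'(r) = b·a·f(r)/μ(r). Then for every r ∈ (r_e, r_c), every θ, and every vector (v_t, v_r, v_φ, v_θ) ∈ ℝ⁴, the Boyer–Lindquist quadratic form ρ²(w_r²/μ + w_θ²/c(θ)) + (c(θ)sin²θ/(b²ρ²))(a·w_t − (r²+a²)w_φ)² − (μ/(b²ρ²))(w_t − a sin²θ·w_φ)² evaluated at w = (v_t + Φ'(r)v_r, v_r, v_φ + Ψ'(r)v_r, v_θ) equals the extended-coordinate quadratic form ρ²·((1−f(r)²)/μ)·v_r² − (2f(r)/b)(v_t − a sin²θ·v_φ)v_r − (μ/(b²ρ²))(v_t − a sin²θ·v_φ)² + (c(θ)sin²θ/(b²ρ²))(a·v_t − (r²+a²)v_φ)² + (ρ²/c(θ))v_θ². (This is the change of variables t₊ = t − Φ(r), φ₊ = φ − Ψ(r) transforming g into g₊.) -/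
open Real

set_option maxHeartbeats 1600000

/-- The change of variables `t₊ = t − Φ(r)`, `φ₊ = φ − Ψ(r)` with
`Φ'(r) = b(r²+a²)f(r)/μ(r)`, `Ψ'(r) = b·a·f(r)/μ(r)` transforms the Boyer–Lindquist
Kerr–de Sitter quadratic form into the extended-coordinate quadratic form `g₊`:
for every `r ∈ (r_e, r_c)`, every `θ` and every tangent vector `(v_t, v_r, v_φ, v_θ)`,
the Boyer–Lindquist form evaluated at `w = (v_t + Φ'(r)v_r, v_r, v_φ + Ψ'(r)v_r, v_θ)`
equals the extended form evaluated at `v`. -/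
theorem BL_to_extended_coordinates
    (Λ m a rm rC re rc : ℝ) (hΛ : 0 < Λ) (hm : 0 < m)
    (μ : ℝ → ℝ)
    (hμ : ∀ r, μ r = -(Λ/3)*r^4 + (1 - Λ*a^2/3)*r^2 - 2*m*r + a^2)
    (hord : rm < rC ∧ rC < re ∧ re < rc)
    (hroots : ∀ r, μ r = -(Λ/3)*(r - rm)*(r - rC)*(r - re)*(r - rc))
    (b : ℝ) (hb : b = 1 + Λ*a^2/3)
    (c : ℝ → ℝ) (hc : ∀ θ, c θ = 1 + Λ*a^2/3*(cos θ)^2)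
    (f : ℝ → ℝ)
    (Φ' Ψ' : ℝ → ℝ)
    (hΦ' : ∀ r, re < r → r < rc → Φ' r = b*(r^2 + a^2)*f r/μ r)
    (hΨ' : ∀ r, re < r → r < rc → Ψ' r = b*a*f r/μ r) :
    ∀ r θ v_t v_r v_φ v_θ : ℝ, re < r → r < rc →
      let ρ2 : ℝ := r^2 + a^2*(cos θ)^2
      let w_t : ℝ := v_t + Φ' r*v_r
      let w_r : ℝ := v_r
      let w_φ : ℝ := v_φ + Ψ' r*v_r
      let w_θ : ℝ := v_θ
      ρ2*(w_r^2/μ r + w_θ^2/c θ)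
        + (c θ*(sin θ)^2/(b^2*ρ2))*(a*w_t - (r^2 + a^2)*w_φ)^2
        - (μ r/(b^2*ρ2))*(w_t - a*(sin θ)^2*w_φ)^2
      = ρ2*((1 - (f r)^2)/μ r)*v_r^2
        - (2*f r/b)*(v_t - a*(sin θ)^2*v_φ)*v_r
        - (μ r/(b^2*ρ2))*(v_t - a*(sin θ)^2*v_φ)^2
        + (c θ*(sin θ)^2/(b^2*ρ2))*(a*v_t - (r^2 + a^2)*v_φ)^2
        + (ρ2/c θ)*v_θ^2 := by
  intro r θ v_t v_r v_φ v_θ hre hrc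
  obtain ⟨h1, h2, h3⟩ := hord
  have hΛ' : (Λ:ℝ) ≠ 0 := ne_of_gt hΛ
  -- polynomial identity pointwise
  have E : ∀ x : ℝ, -(Λ/3)*x^4 + (1 - Λ*a^2/3)*x^2 - 2*m*x + a^2
      = -(Λ/3)*(x - rm)*(x - rC)*(x - re)*(x - rc) :=
    fun x => (hμ x).symm.trans (hroots x)
  -- sum of roots is zero
  have hsum : rm + rC + re + rc = 0 := by
    have h := E 2; have h' := E (-2); have h1' := E 1; have h2' := E (-1)
    have : Λ * (rm + rC + re + rc) = 0 := by linear_combination (-1/4) * h + (1/4) * h' + (1/2) * h1' - (1/2) * h2'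
    exact by
      rcases mul_eq_zero.mp this with h | h
      · exact absurd h hΛ'
      · exact h
  -- e3 relation
  have he3 : Λ * (rm*rC*re + rm*rC*rc + rm*re*rc + rC*re*rc) = -(6*m) := by
    have h := E 2; have h' := E (-2); have h1' := E 1; have h2' := E (-1)
    linear_combination (1/4) * h - (1/4) * h' - 2 * h1' + 2 * h2'
  -- re is positive
  have hrepos : 0 < re := by
    by_contra hle
    push_neg at hle
    have hq : 0 < -rC := by linarith
    have hp : 0 < -rm := by linarith
    have hs : 0 ≤ -re := by linarith
    have hrc' : rc = -(rm + rC + re) := by linarith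
    have e3pos : 0 < rm*rC*re + rm*rC*rc + rm*re*rc + rC*re*rc := by
      rw [hrc']
      nlinarith [mul_pos (mul_pos hp hp) hq, mul_nonneg (mul_nonneg hp.le hp.le) hs,
        mul_nonneg (mul_nonneg hp.le hq.le) hq.le, mul_nonneg (mul_nonneg hq.le hq.le) hs,
        mul_nonneg (mul_nonneg hp.le hs) hs, mul_nonneg (mul_nonneg hq.le hs) hs,
        mul_nonneg (mul_nonneg hp.le hq.le) hs]
    nlinarith [mul_pos hΛ e3pos]
  have hr0 : 0 < r := lt_trans hrepos hre
  have hρ2 : (0:ℝ) < r^2 + a^2*(cos θ)^2 := by positivity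
  have hμpos : 0 < μ r := by
    rw [hroots r]
    have hL3 : (0:ℝ) < Λ/3 := by linarith
    nlinarith [mul_pos (mul_pos (mul_pos (mul_pos hL3 (show (0:ℝ) < r - rm by linarith))
      (show (0:ℝ) < r - rC by linarith)) (show (0:ℝ) < r - re by linarith))
      (show (0:ℝ) < rc - r by linarith)]
  have hμne : μ r ≠ 0 := ne_of_gt hμpos
  have hb' : b ≠ 0 := by rw [hb]; positivity
  have hc' : c θ ≠ 0 := by rw [hc]; positivity
  have hcos : (cos θ)^2 = 1 - (sin θ)^2 := by
    have := sin_sq_add_cos_sq θ; linarith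
  have hρ2' : r^2 + a^2*(1 - (sin θ)^2) ≠ 0 := by
    rw [← hcos]; exact ne_of_gt hρ2
  simp only
  rw [hΦ' r hre hrc, hΨ' r hre hrc, hcos]
  field_simp
  ring
end

section
/- If r₀ ∈ (r_e, r_c), then there exists an open interval U ⊆ (r_e, r_c) containing r₀ such that Q(r, θ) < 0 for all r ∈ U and all θ ∈ ℝ; that is, the Killing field T = ∂_t + (a/(r₀²+a²))∂_φ is timelike in a neighborhood of the hypersurface {r = r₀}. -/
open Real


private lemma aux_e3_pos (rm rC re rc : ℝ) (h1 : rm < rC) (h2 : rC < re) (h3 : re < 0)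
    (hsum : rm + rC + re + rc = 0) :
    0 < rm*rC*re + rm*rC*rc + rm*re*rc + rC*re*rc := by
  have hx : 0 < -rm := by linarith
  have hy : 0 < -rC := by linarith
  have hz : 0 < -re := by linarith
  have hrc : rc = -(rm + rC + re) := by linarith
  rw [hrc]
  nlinarith [mul_pos (mul_pos hx hy) hz, mul_pos hx hy, mul_pos hx hz, mul_pos hy hz,
    mul_pos (mul_pos hx hx) hy, mul_pos (mul_pos hx hx) hz, mul_pos (mul_pos hy hy) hx,
    mul_pos (mul_pos hy hy) hz, mul_pos (mul_pos hz hz) hx, mul_pos (mul_pos hz hz) hy]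

private lemma aux_trig (k s t : ℝ) (hk : 0 ≤ k) (hst : s^2 + t^2 = 1) :
    (1 + k*t^2) * s^2 ≤ 1 + k := by
  have hs : s^2 = 1 - t^2 := by linarith
  have ht0 : 0 ≤ t^2 := sq_nonneg t
  have ht1 : t^2 ≤ 1 := by nlinarith [sq_nonneg s]
  nlinarith [mul_nonneg hk (sub_nonneg.mpr ht1), mul_nonneg hk (sq_nonneg (t^2))]

private lemma aux_neg_of_mul_sq (B D : ℝ) (h : B * D^2 < 0) : B < 0 := by
  by_contra hB
  push_neg at hB
  nlinarith [mul_nonneg hB (sq_nonneg D)]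

private lemma aux_sq_mono (x y : ℝ) (hx : 0 ≤ x) (hxy : x ≤ y) : x^2 ≤ y^2 := by
  nlinarith

private lemma aux_div_pos_neg (p B : ℝ) (hp : 0 < p) (hB : B < 0) : 1/p * B < 0 :=
  mul_neg_of_pos_of_neg (by positivity) hB


set_option maxHeartbeats 1000000 in
/-- If `r₀ ∈ (r_e, r_c)`, then there is an open interval
`U = (u₁, u₂) ⊆ (r_e, r_c)` containing `r₀` on which `Q < 0` for all `θ`; i.e., the
Killing field `T = ∂_t + (a/(r₀²+a²))∂_φ` is timelike in a neighborhood of `{r = r₀}`. -/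
theorem killing_timelike_near_r0
    (Λ m a rm rC re rc : ℝ) (hΛ : 0 < Λ) (hm : 0 < m)
    (μ : ℝ → ℝ)
    (hμ : ∀ r, μ r = -(Λ/3)*r^4 + (1 - Λ*a^2/3)*r^2 - 2*m*r + a^2)
    (hord : rm < rC ∧ rC < re ∧ re < rc)
    (hroots : ∀ r, μ r = -(Λ/3)*(r - rm)*(r - rC)*(r - re)*(r - rc))
    (b : ℝ) (hb : b = 1 + Λ*a^2/3)
    (c : ℝ → ℝ) (hc : ∀ θ, c θ = 1 + Λ*a^2/3*(cos θ)^2)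
    (r₀ : ℝ) (hr₀ : re < r₀ ∧ r₀ < rc)
    (Q : ℝ → ℝ → ℝ)
    (hQ : ∀ r θ, Q r θ = (1/(b^2*(r^2 + a^2*(cos θ)^2)))*
      (c θ*(sin θ)^2*(a - (r^2 + a^2)*a/(r₀^2 + a^2))^2
        - μ r*(1 - a^2*(sin θ)^2/(r₀^2 + a^2))^2)) :
    ∃ u₁ u₂ : ℝ, re ≤ u₁ ∧ u₁ < r₀ ∧ r₀ < u₂ ∧ u₂ ≤ rc ∧
      ∀ r ∈ Set.Ioo u₁ u₂, ∀ θ : ℝ, Q r θ < 0 := by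
  obtain ⟨ho1, ho2, ho3⟩ := hord
  obtain ⟨hr1, hr2⟩ := hr₀
  have hΛ3 : (0:ℝ) < Λ/3 := by linarith
  have key : ∀ r : ℝ, -(Λ/3)*r^4 + (1 - Λ*a^2/3)*r^2 - 2*m*r + a^2
      = -(Λ/3)*(r - rm)*(r - rC)*(r - re)*(r - rc) :=
    fun r => (hμ r).symm.trans (hroots r)
  have hA : Λ/3*(rm + rC + re + rc) = 0 := by
    linear_combination (-(1:ℝ)/12)*key 2 + ((1:ℝ)/12)*key (-2) + ((1:ℝ)/6)*key 1 + (-(1:ℝ)/6)*key (-1)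
  have he1 : rm + rC + re + rc = 0 := by
    rcases mul_eq_zero.mp hA with h | h
    · exact absurd h hΛ3.ne'
    · exact h
  have hC : Λ/3*(rm*rC*re + rm*rC*rc + rm*re*rc + rC*re*rc) = -(2*m) := by
    linear_combination (-(8:ℝ)/12)*key 1 + ((8:ℝ)/12)*key (-1) + ((1:ℝ)/12)*key 2 + (-(1:ℝ)/12)*key (-2)
  have hre0 : 0 ≤ re := by
    by_contra h
    push_neg at h
    have he3 := aux_e3_pos rm rC re rc ho1 ho2 h he1
    have : Λ/3*(rm*rC*re + rm*rC*rc + rm*re*rc + rC*re*rc) > 0 := mul_pos hΛ3 he3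
    linarith
  have hr0pos : 0 < r₀ := lt_of_le_of_lt hre0 hr1
  have hμpos : ∀ r, re < r → r < rc → 0 < μ r := by
    intro r h1 h2
    have hfac : 0 < (Λ/3) * ((r - rm) * ((r - rC) * ((r - re) * (rc - r)))) := by
      apply mul_pos hΛ3
      apply mul_pos (by linarith)
      apply mul_pos (by linarith)
      exact mul_pos (by linarith) (by linarith)
    have heq : μ r = (Λ/3) * ((r - rm) * ((r - rC) * ((r - re) * (rc - r)))) := by
      rw [hroots]; ring
    rw [heq]; exact hfac
  have hbpos : 0 < b := by
    rw [hb]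
    have : 0 ≤ Λ*a^2/3 := by positivity
    linarith
  have hden : 0 < r₀^2 + a^2 := by positivity
  set f : ℝ → ℝ := fun r => (-(Λ/3)*r^4 + (1 - Λ*a^2/3)*r^2 - 2*m*r + a^2) * r₀^4
      - b*a^2*(r^2 - r₀^2)^2 with hf_def
  have hf : Continuous f := by fun_prop
  have hf0 : f r₀ ∈ Set.Ioi (0:ℝ) := by
    simp only [Set.mem_Ioi]
    have heq : f r₀ = μ r₀ * r₀^4 := by rw [hf_def]; simp only []; rw [← hμ r₀]; ring
    rw [heq]
    have := hμpos r₀ hr1 hr2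
    positivity
  obtain ⟨ε, hε, hball⟩ := Metric.isOpen_iff.mp (isOpen_Ioi.preimage hf) r₀ hf0
  refine ⟨max re (r₀ - ε), min rc (r₀ + ε), le_max_left _ _, ?_, ?_, min_le_left _ _, ?_⟩
  · exact max_lt hr1 (by linarith)
  · exact lt_min hr2 (by linarith)
  intro r hr θ
  obtain ⟨hru, hrv⟩ := hr
  have hre_r : re < r := lt_of_le_of_lt (le_max_left _ _) hru
  have hr_rc : r < rc := lt_of_lt_of_le hrv (min_le_left _ _)
  have habs : |r - r₀| < ε := by
    rw [abs_lt]
    constructor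
    · have := lt_of_le_of_lt (le_max_right re (r₀ - ε)) hru; linarith
    · have := lt_of_lt_of_le hrv (min_le_right rc (r₀ + ε)); linarith
  have hfr : 0 < f r := by
    have : r ∈ Metric.ball r₀ ε := by rwa [Metric.mem_ball, Real.dist_eq]
    exact hball this
  have hfr' : b*a^2*(r^2 - r₀^2)^2 < μ r * r₀^4 := by
    rw [hf_def] at hfr
    simp only at hfr
    rw [hμ r]; linarith
  have hrpos : 0 < r := lt_of_le_of_lt hre0 hre_r
  have hμr : 0 < μ r := hμpos r hre_r hr_rc
  have hr2pos : 0 < r^2 := by positivity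
  have hρ : 0 < r^2 + a^2*(cos θ)^2 := by
    have : 0 ≤ a^2*(cos θ)^2 := by positivity
    linarith
  rw [hQ r θ]
  apply aux_div_pos_neg _ _ (by positivity)
  have hcs : c θ * (sin θ)^2 ≤ b := by
    rw [hc, hb]
    exact aux_trig (Λ*a^2/3) (sin θ) (cos θ) (by positivity) (sin_sq_add_cos_sq θ)
  have hcpos : 0 ≤ c θ * (sin θ)^2 := by
    rw [hc]; positivity
  set B := c θ*(sin θ)^2*(a - (r^2 + a^2)*a/(r₀^2 + a^2))^2
      - μ r*(1 - a^2*(sin θ)^2/(r₀^2 + a^2))^2 with hB_def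
  have hs : (sin θ)^2 = 1 - (cos θ)^2 := by
    have := sin_sq_add_cos_sq θ; linarith
  have hX : (a - (r^2 + a^2)*a/(r₀^2 + a^2)) * (r₀^2 + a^2) = a*(r₀^2 - r^2) := by
    field_simp; ring
  have hY : (1 - a^2*(sin θ)^2/(r₀^2 + a^2)) * (r₀^2 + a^2) = r₀^2 + a^2*(cos θ)^2 := by
    rw [hs]; field_simp; ring
  have hBmul : B * (r₀^2 + a^2)^2 = c θ*(sin θ)^2*(a*(r₀^2 - r^2))^2
      - μ r*(r₀^2 + a^2*(cos θ)^2)^2 := by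
    have hexp : B * (r₀^2 + a^2)^2
        = c θ*(sin θ)^2*((a - (r^2 + a^2)*a/(r₀^2 + a^2)) * (r₀^2 + a^2))^2
          - μ r*((1 - a^2*(sin θ)^2/(r₀^2 + a^2)) * (r₀^2 + a^2))^2 := by
      rw [hB_def]; ring
    rw [hexp, hX, hY]
  have hBneg : B * (r₀^2 + a^2)^2 < 0 := by
    rw [hBmul]
    have h1 : c θ*(sin θ)^2*(a*(r₀^2 - r^2))^2 ≤ b*((a*(r₀^2 - r^2))^2) :=
      mul_le_mul_of_nonneg_right hcs (sq_nonneg _)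
    have h1' : b*((a*(r₀^2 - r^2))^2) = b*a^2*(r^2 - r₀^2)^2 := by ring
    have h3 : μ r * (r₀^2)^2 ≤ μ r*(r₀^2 + a^2*(cos θ)^2)^2 := by
      apply mul_le_mul_of_nonneg_left _ hμr.le
      apply aux_sq_mono _ _ (sq_nonneg r₀)
      have : 0 ≤ a^2*(cos θ)^2 := by positivity
      linarith
    have h4 : μ r * (r₀^2)^2 = μ r * r₀^4 := by ring
    linarith
  exact aux_neg_of_mul_sq B (r₀^2 + a^2) hBneg
end

section
/- If r₀ = r_e, then for every θ the radial derivative satisfies ∂_r Q(r,θ)|_{r=r_e} = −μ'(r_e)·ρ²(r_e,θ)/(b²(r_e²+a²)²) < 0, and consequently there exists γ > 0 such that Q(r,θ) < 0 for all r ∈ (r_e, r_e+γ) and all θ. Analogously, if r₀ = r_c, then ∂_r Q(r,θ)|_{r=r_c} = −μ'(r_c)·ρ²(r_c,θ)/(b²(r_c²+a²)²) > 0 for every θ, and there exists γ > 0 such that Q(r,θ) < 0 for all r ∈ (r_c−γ, r_c) and all θ. -/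
/-!
At a horizon `R` of the Killing field, `Q(·, θ)` is a positive multiple of
`c sin²θ · a² (R² - r²)² - μ(r) (R² + a² cos²θ)²`. The first term vanishes to second order at `R`
and `μ(R) = 0`, so `∂_r Q(R, θ)` is read off from `μ'(R)`, whose sign comes from the factorisation
of `μ`. For a sign of `Q` uniform in `θ`, the numerator is bounded above by
`b a² (R² - r²)² - μ(r) R⁴`, a function of `r` alone that vanishes at `R` with derivative
`-μ'(R) R⁴`. Vieta's formulas give `r_e, r_c ≠ 0`, which keeps `ρ²` away from `0` near the horizons.
-/

open Real Filter Topology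

theorem quartic_vieta {k p q s r₁ r₂ r₃ r₄ : ℝ} (hk : k ≠ 0)
    (h : ∀ r, k*r^4 + p*r^2 + q*r + s = k*(r - r₁)*(r - r₂)*(r - r₃)*(r - r₄)) :
    r₁ + r₂ + r₃ + r₄ = 0 ∧ q = -k*(r₁*r₂*r₃ + r₁*r₂*r₄ + r₁*r₃*r₄ + r₂*r₃*r₄) := by
  have hsum : k * (r₁ + r₂ + r₃ + r₄) = 0 := by
    linear_combination (1/12)*(h 2 - h (-2)) - (1/6)*(h 1 - h (-1))
  have hsum' := (mul_eq_zero.mp hsum).resolve_left hk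
  refine ⟨hsum', ?_⟩
  linear_combination (1/2)*(h 1 - h (-1)) - k * hsum'

theorem hasDerivAt_mul_sub_self {h : ℝ → ℝ} {x : ℝ} (hh : DifferentiableAt ℝ h x) :
    HasDerivAt (fun r => h r * (r - x)) (h x) x :=
  (hh.hasDerivAt.mul ((hasDerivAt_id' x).sub_const x)).congr_deriv (by simp)

theorem eventually_neg_of_hasDerivAt {f : ℝ → ℝ} {f' x : ℝ} (hf : HasDerivAt f f' x)
    (hx : f x = 0) : ∀ᶠ y in 𝓝 x, f' * (y - x) < 0 → f y < 0 := by
  rcases lt_trichotomy f' 0 with hf' | hf' | hf'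
  · filter_upwards [eventually_nhdsWithin_sign_eq_of_deriv_neg (hf.deriv ▸ hf') hx] with y hy hneg
    have : x - y < 0 := by nlinarith
    rwa [← sign_eq_neg_one_iff, hy, sign_eq_neg_one_iff]
  · simp [hf']
  · filter_upwards [eventually_nhdsWithin_sign_eq_of_deriv_pos (hf.deriv ▸ hf') hx] with y hy hneg
    have : y - x < 0 := by nlinarith
    rwa [← sign_eq_neg_one_iff, hy, sign_eq_neg_one_iff]

theorem quartic_deriv_sign_at_largest_roots {k r₁ r₂ r₃ r₄ : ℝ} {μ : ℝ → ℝ} (hk : k < 0)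
    (h₁ : r₁ < r₂) (h₂ : r₂ < r₃) (h₃ : r₃ < r₄)
    (hμ : ∀ r, μ r = k*(r - r₁)*(r - r₂)*(r - r₃)*(r - r₄)) :
    0 < deriv μ r₃ ∧ deriv μ r₄ < 0 := by
  have h₃' : HasDerivAt μ (k*(r₃ - r₁)*(r₃ - r₂)*(r₃ - r₄)) r₃ := by
    rw [funext fun r => (hμ r).trans (by ring : _ = k*(r - r₁)*(r - r₂)*(r - r₄)*(r - r₃))]
    exact hasDerivAt_mul_sub_self (by fun_prop)
  have h₄' : HasDerivAt μ (k*(r₄ - r₁)*(r₄ - r₂)*(r₄ - r₃)) r₄ := by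
    rw [funext hμ]
    exact hasDerivAt_mul_sub_self (by fun_prop)
  rw [h₃'.deriv, h₄'.deriv]
  have hpos₃ : 0 < (r₃ - r₁)*(r₃ - r₂) := mul_pos (by linarith) (by linarith)
  have hpos₄ : 0 < (r₄ - r₁)*(r₄ - r₂)*(r₄ - r₃) :=
    mul_pos (mul_pos (by linarith) (by linarith)) (by linarith)
  constructor <;> nlinarith [mul_pos_of_neg_of_neg hk (sub_neg.2 h₃)]

theorem kds_horizons_ne_zero {Λ m p s rm rC re rc : ℝ} (hΛ : 0 < Λ) (hm : 0 < m)
    (hord : rm < rC ∧ rC < re ∧ re < rc)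
    (h : ∀ r, -(Λ/3)*r^4 + p*r^2 - 2*m*r + s = -(Λ/3)*(r - rm)*(r - rC)*(r - re)*(r - rc)) :
    re ≠ 0 ∧ rc ≠ 0 := by
  obtain ⟨h₁, h₂, h₃⟩ := hord
  obtain ⟨hsum, hlin⟩ := quartic_vieta (k := -(Λ/3)) (p := p) (q := -2*m) (s := s)
    (r₁ := rm) (r₂ := rC) (r₃ := re) (r₄ := rc) (neg_ne_zero.2 (by positivity))
    fun r => by linear_combination h r
  refine ⟨fun hre => ?_, fun hrc => by linarith⟩
  subst hre
  have : 0 < rm * rC * rc := mul_pos (mul_pos_of_neg_of_neg (by linarith) (by linarith)) h₃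
  nlinarith

noncomputable def kdsKillingLength (a b r₀ : ℝ) (c μ : ℝ → ℝ) (r θ : ℝ) : ℝ :=
  (1/(b^2*(r^2 + a^2*(cos θ)^2)))*
    (c θ*(sin θ)^2*(a - (r^2 + a^2)*a/(r₀^2 + a^2))^2
      - μ r*(1 - a^2*(sin θ)^2/(r₀^2 + a^2))^2)

section KillingLength

variable {a b R : ℝ} {c μ : ℝ → ℝ}

theorem kdsKillingLength_eq (hR : R ≠ 0) (r θ : ℝ) :
    kdsKillingLength a b R c μ r θ =
      1/(b^2*(r^2 + a^2*(cos θ)^2)) *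
        ((c θ * (sin θ)^2 * a^2 * (R^2 - r^2)^2 - μ r * (R^2 + a^2*(cos θ)^2)^2) / (R^2 + a^2)^2) := by
  have : R^2 + a^2 ≠ 0 := by positivity
  rw [kdsKillingLength]
  congr 1
  rw [sin_sq]
  field_simp
  ring

theorem kdsKillingLength_neg_of_lt {r θ : ℝ} (hR : R ≠ 0) (hr : r ≠ 0) (hb : 0 < b)
    (hcb : c θ ≤ b) (h : b*a^2*(R^2 - r^2)^2 < μ r * R^4) :
    kdsKillingLength a b R c μ r θ < 0 := by
  rw [kdsKillingLength_eq hR]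
  refine mul_neg_of_pos_of_neg (by positivity) (div_neg_of_neg_of_pos ?_ (by positivity))
  have hμ : 0 < μ r := by
    have : 0 ≤ b*a^2*(R^2 - r^2)^2 := by positivity
    exact pos_of_mul_pos_left (this.trans_lt h) (by positivity)
  have hcs : c θ * (sin θ)^2 ≤ b := by nlinarith [sin_sq_le_one θ]
  have hρ : R^4 ≤ (R^2 + a^2*(cos θ)^2)^2 := by nlinarith [sq_nonneg (a * cos θ), sq_nonneg R]
  calc c θ * (sin θ)^2 * a^2 * (R^2 - r^2)^2 - μ r * (R^2 + a^2*(cos θ)^2)^2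
      ≤ b * a^2 * (R^2 - r^2)^2 - μ r * R^4 := by gcongr
    _ < 0 := by linarith

theorem hasDerivAt_kdsKillingLength {D : ℝ} (hR : R ≠ 0) (hb : b ≠ 0) (hμR : μ R = 0)
    (hμ : HasDerivAt μ D R) (θ : ℝ) :
    HasDerivAt (fun r => kdsKillingLength a b R c μ r θ)
      (-(D*(R^2 + a^2*(cos θ)^2))/(b^2*(R^2 + a^2)^2)) R := by
  have hA : R^2 + a^2 ≠ 0 := by positivity
  have hρ : R^2 + a^2*(cos θ)^2 ≠ 0 := by positivity
  set v : ℝ → ℝ := fun r => a - (r^2 + a^2)*a/(R^2 + a^2)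
  have hvR : v R = 0 := by simp only [v]; field_simp; ring
  have hv : HasDerivAt (fun r => v r ^ 2) 0 R := by
    have hv' : DifferentiableAt ℝ v R := by fun_prop
    exact (hv'.hasDerivAt.pow 2).congr_deriv (by simp [hvR])
  have hg : DifferentiableAt ℝ (fun r => 1/(b^2*(r^2 + a^2*(cos θ)^2))) R := by
    fun_prop (disch := positivity)
  have hN := (hv.const_mul (c θ*(sin θ)^2)).sub
    (hμ.mul_const ((1 - a^2*(sin θ)^2/(R^2 + a^2))^2))
  refine (hg.hasDerivAt.mul hN).congr_deriv ?_
  rw [Pi.sub_apply, hvR, hμR, sin_sq]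
  field_simp
  ring

theorem kdsKillingLength_horizon (hR : R ≠ 0) (hb : 0 < b) (hcb : ∀ θ, c θ ≤ b)
    (hμR : μ R = 0) (hμ : DifferentiableAt ℝ μ R) :
    (∀ θ, deriv (fun r => kdsKillingLength a b R c μ r θ) R
        = -(deriv μ R * (R^2 + a^2*(cos θ)^2))/(b^2*(R^2 + a^2)^2)) ∧
      ∃ γ > 0, ∀ r θ, 0 < deriv μ R * (r - R) → |r - R| < γ →
        kdsKillingLength a b R c μ r θ < 0 := by
  refine ⟨fun θ => (hasDerivAt_kdsKillingLength hR hb.ne' hμR hμ.hasDerivAt θ).deriv, ?_⟩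
  have hf : HasDerivAt (fun r => b*a^2*(R^2 - r^2)^2 - μ r * R^4) (-(deriv μ R * R^4)) R := by
    have h := ((((hasDerivAt_pow 2 R).const_sub (R^2)).pow 2).const_mul (b*a^2)).sub
      (hμ.hasDerivAt.mul_const (R^4))
    exact h.congr_deriv (by simp)
  have hR4 : 0 < R^4 := by positivity
  have hev := (eventually_neg_of_hasDerivAt hf (by simp [hμR])).and (eventually_ne_nhds hR)
  obtain ⟨γ, hγ, hball⟩ := Metric.eventually_nhds_iff.mp hev
  refine ⟨γ, hγ, fun r θ hD hr => ?_⟩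
  obtain ⟨hneg, hr₀⟩ := hball (by rwa [Real.dist_eq])
  refine kdsKillingLength_neg_of_lt hR hr₀ hb (hcb θ) ?_
  have := hneg (by nlinarith)
  linarith

end KillingLength

theorem killing_timelike_near_horizon_general
    (Λ m a rm rC re rc : ℝ) (hΛ : 0 < Λ) (hm : 0 < m)
    (μ : ℝ → ℝ)
    (hμ : ∀ r, μ r = -(Λ/3)*r^4 + (1 - Λ*a^2/3)*r^2 - 2*m*r + a^2)
    (hord : rm < rC ∧ rC < re ∧ re < rc)
    (hroots : ∀ r, μ r = -(Λ/3)*(r - rm)*(r - rC)*(r - re)*(r - rc))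
    (b : ℝ) (hb : b = 1 + Λ*a^2/3)
    (c : ℝ → ℝ) (hc : ∀ θ, c θ = 1 + Λ*a^2/3*(cos θ)^2)
    (r₀ : ℝ)
    (Q : ℝ → ℝ → ℝ)
    (hQ : ∀ r θ, Q r θ = (1/(b^2*(r^2 + a^2*(cos θ)^2)))*
      (c θ*(sin θ)^2*(a - (r^2 + a^2)*a/(r₀^2 + a^2))^2
        - μ r*(1 - a^2*(sin θ)^2/(r₀^2 + a^2))^2)) :
    (r₀ = re →
      (∀ θ, deriv (fun r => Q r θ) re
          = -(deriv μ re*(re^2 + a^2*(cos θ)^2))/(b^2*(re^2 + a^2)^2) ∧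
        deriv (fun r => Q r θ) re < 0) ∧
      ∃ γ > (0:ℝ), ∀ r θ : ℝ, re < r → r < re + γ → Q r θ < 0) ∧
    (r₀ = rc →
      (∀ θ, deriv (fun r => Q r θ) rc
          = -(deriv μ rc*(rc^2 + a^2*(cos θ)^2))/(b^2*(rc^2 + a^2)^2) ∧
        0 < deriv (fun r => Q r θ) rc) ∧
      ∃ γ > (0:ℝ), ∀ r θ : ℝ, rc - γ < r → r < rc → Q r θ < 0) := by
  have hb₀ : 0 < b := by rw [hb]; positivity
  have hcb : ∀ θ, c θ ≤ b := fun θ => by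
    rw [hc, hb]; nlinarith [cos_sq_le_one θ, mul_nonneg hΛ.le (sq_nonneg a)]
  obtain ⟨hre, hrc⟩ := kds_horizons_ne_zero hΛ hm hord fun r => (hμ r).symm.trans (hroots r)
  obtain ⟨h₁, h₂, h₃⟩ := hord
  obtain ⟨hDe, hDc⟩ := quartic_deriv_sign_at_largest_roots (by linarith) h₁ h₂ h₃ hroots
  have hμd : Differentiable ℝ μ := by rw [funext hroots]; fun_prop
  have hQ' : Q = kdsKillingLength a b r₀ c μ := funext₂ hQ
  subst hQ'
  refine ⟨fun h₀ => ?_, fun h₀ => ?_⟩ <;> rw [h₀]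
  · obtain ⟨hderiv, γ, hγ, hneg⟩ :=
      kdsKillingLength_horizon hre hb₀ hcb (by rw [hroots]; ring) (hμd re)
    refine ⟨fun θ => ⟨hderiv θ, ?_⟩, γ, hγ, fun r θ h h' => hneg r θ ?_ ?_⟩
    · rw [hderiv]
      exact div_neg_of_neg_of_pos (neg_neg_of_pos (by positivity)) (by positivity)
    · exact mul_pos hDe (by linarith)
    · exact abs_sub_lt_iff.2 ⟨by linarith, by linarith⟩
  · obtain ⟨hderiv, γ, hγ, hneg⟩ :=
      kdsKillingLength_horizon hrc hb₀ hcb (by rw [hroots]; ring) (hμd rc)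
    refine ⟨fun θ => ⟨hderiv θ, ?_⟩, γ, hγ, fun r θ h h' => hneg r θ ?_ ?_⟩
    · rw [hderiv]
      exact div_pos (neg_pos_of_neg (mul_neg_of_neg_of_pos hDc (by positivity))) (by positivity)
    · exact mul_pos_of_neg_of_neg hDc (by linarith)
    · exact abs_sub_lt_iff.2 ⟨by linarith, by linarith⟩

/-- For the horizon Killing fields: if `r₀ = r_e`, then for every `θ`
`∂_r Q(r,θ)|_{r=r_e} = −μ'(r_e)·ρ²(r_e,θ)/(b²(r_e²+a²)²) < 0`, and consequently `Q < 0`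
on a region `(r_e, r_e+γ)` for some `γ > 0`; analogously, if `r₀ = r_c`, then
`∂_r Q(r,θ)|_{r=r_c} = −μ'(r_c)·ρ²(r_c,θ)/(b²(r_c²+a²)²) > 0` and `Q < 0` on
`(r_c−γ, r_c)` for some `γ > 0`. -/
theorem killing_timelike_near_horizon
    (Λ m a rm rC re rc : ℝ) (hΛ : 0 < Λ) (hm : 0 < m)
    (μ : ℝ → ℝ)
    (hμ : ∀ r, μ r = -(Λ/3)*r^4 + (1 - Λ*a^2/3)*r^2 - 2*m*r + a^2)
    (hord : rm < rC ∧ rC < re ∧ re < rc)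
    (hroots : ∀ r, μ r = -(Λ/3)*(r - rm)*(r - rC)*(r - re)*(r - rc))
    (b : ℝ) (hb : b = 1 + Λ*a^2/3)
    (c : ℝ → ℝ) (hc : ∀ θ, c θ = 1 + Λ*a^2/3*(cos θ)^2)
    (r₀ : ℝ) (hr₀ : re ≤ r₀ ∧ r₀ ≤ rc)
    (Q : ℝ → ℝ → ℝ)
    (hQ : ∀ r θ, Q r θ = (1/(b^2*(r^2 + a^2*(cos θ)^2)))*
      (c θ*(sin θ)^2*(a - (r^2 + a^2)*a/(r₀^2 + a^2))^2
        - μ r*(1 - a^2*(sin θ)^2/(r₀^2 + a^2))^2)) :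
    (r₀ = re →
      (∀ θ, deriv (fun r => Q r θ) re
          = -(deriv μ re*(re^2 + a^2*(cos θ)^2))/(b^2*(re^2 + a^2)^2) ∧
        deriv (fun r => Q r θ) re < 0) ∧
      ∃ γ > (0:ℝ), ∀ r θ : ℝ, re < r → r < re + γ → Q r θ < 0) ∧
    (r₀ = rc →
      (∀ θ, deriv (fun r => Q r θ) rc
          = -(deriv μ rc*(rc^2 + a^2*(cos θ)^2))/(b^2*(rc^2 + a^2)^2) ∧
        0 < deriv (fun r => Q r θ) rc) ∧
      ∃ γ > (0:ℝ), ∀ r θ : ℝ, rc - γ < r → r < rc → Q r θ < 0) :=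
  killing_timelike_near_horizon_general Λ m a rm rC re rc hΛ hm μ hμ hord hroots b hb c hc r₀ Q hQ
end

section
/- Suppose a ≠ 0. If r₀ ∈ (r_e, r_c), then for every θ with sin θ ≠ 0 one has Q(r_e, θ) > 0 and Q(r_c, θ) > 0: the Killing field T is spacelike at both horizons away from the poles, so there are two ergoregions with respect to T. If instead r₀ = r_e, then Q(r_e, θ) = 0 for all θ while Q(r_c, θ) > 0 whenever sin θ ≠ 0 (and symmetrically if r₀ = r_c), so there is only one ergoregion. -/
open Real

/-- Suppose `a ≠ 0`. If `r₀ ∈ (r_e, r_c)`, then away from the poles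
(`sin θ ≠ 0`) the Killing field `T` is spacelike at both horizons (`Q(r_e,θ) > 0` and
`Q(r_c,θ) > 0`), so there are two ergoregions with respect to `T`. If instead `r₀ = r_e`,
then `Q(r_e,θ) = 0` for all `θ` while `Q(r_c,θ) > 0` whenever `sin θ ≠ 0`, and
symmetrically if `r₀ = r_c`: there is only one ergoregion. -/
theorem ergoregions_at_horizons
    (Λ m a rm rC re rc : ℝ) (hΛ : 0 < Λ) (hm : 0 < m)
    (μ : ℝ → ℝ)
    (hμ : ∀ r, μ r = -(Λ/3)*r^4 + (1 - Λ*a^2/3)*r^2 - 2*m*r + a^2)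
    (hord : rm < rC ∧ rC < re ∧ re < rc)
    (hroots : ∀ r, μ r = -(Λ/3)*(r - rm)*(r - rC)*(r - re)*(r - rc))
    (b : ℝ) (hb : b = 1 + Λ*a^2/3)
    (c : ℝ → ℝ) (hc : ∀ θ, c θ = 1 + Λ*a^2/3*(cos θ)^2)
    (r₀ : ℝ) (hr₀ : re ≤ r₀ ∧ r₀ ≤ rc)
    (Q : ℝ → ℝ → ℝ)
    (hQ : ∀ r θ, Q r θ = (1/(b^2*(r^2 + a^2*(cos θ)^2)))*
      (c θ*(sin θ)^2*(a - (r^2 + a^2)*a/(r₀^2 + a^2))^2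
        - μ r*(1 - a^2*(sin θ)^2/(r₀^2 + a^2))^2))
    (ha : a ≠ 0) :
    (re < r₀ → r₀ < rc → ∀ θ : ℝ, sin θ ≠ 0 → 0 < Q re θ ∧ 0 < Q rc θ) ∧
    (r₀ = re → (∀ θ : ℝ, Q re θ = 0) ∧ (∀ θ : ℝ, sin θ ≠ 0 → 0 < Q rc θ)) ∧
    (r₀ = rc → (∀ θ : ℝ, Q rc θ = 0) ∧ (∀ θ : ℝ, sin θ ≠ 0 → 0 < Q re θ)) := by
  obtain ⟨h1, h2, h3⟩ := hord
  have hμre : μ re = 0 := by rw [hroots]; ring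
  have hμrc : μ rc = 0 := by rw [hroots]; ring
  have ha2 : 0 < a^2 := pow_two_pos_of_ne_zero ha
  -- sum of roots is zero
  have hsum : rm + rC + re + rc = 0 := by
    have k1 := (hμ 1).symm.trans (hroots 1)
    have k2 := (hμ (-1)).symm.trans (hroots (-1))
    have k3 := (hμ 2).symm.trans (hroots 2)
    have k4 := (hμ (-2)).symm.trans (hroots (-2))
    have hΛ' : Λ ≠ 0 := ne_of_gt hΛ
    have hkey : Λ/3 * (rm + rC + re + rc) = 0 := by
      linear_combination -(1/12)*k3 + (1/12)*k4 + (1/6)*k1 - (1/6)*k2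
    rcases mul_eq_zero.mp hkey with h | h
    · exact absurd h (div_ne_zero hΛ' (by norm_num))
    · exact h
  -- re is positive
  have hre : 0 < re := by
    by_contra hn
    push_neg at hn
    rcases lt_or_eq_of_le hn with hlt | heq
    · -- re < 0
      have hv : μ (-re) = 4*m*re := by
        linear_combination (hμ (-re)) - (hμ re) + hμre
      have hp := hroots (-re)
      rw [hv] at hp
      have f1 : 0 < -re - rm := by linarith
      have f2 : 0 < -re - rC := by linarith
      have f3 : 0 < -re - re := by linarith
      have hP : 0 < (-re - rm) * (-re - rC) * (-re - re) := mul_pos (mul_pos f1 f2) f3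
      have frc : rc < -re := by
        by_contra hge
        push_neg at hge
        have hnn : (0:ℝ) ≤ re + rc := by linarith
        nlinarith [mul_nonneg (mul_nonneg (by positivity : (0:ℝ) ≤ Λ/3) hP.le) hnn,
          mul_pos hm (neg_pos.mpr hlt)]
      linarith
    · have h0 : μ re = a^2 := by rw [hμ, heq]; norm_num
      rw [hμre] at h0
      exact absurd h0.symm (ne_of_gt ha2)
  have hrc : 0 < rc := by linarith
  have hr0pos : 0 < r₀ := by linarith [hr₀.1]
  have hden : 0 < r₀^2 + a^2 := by nlinarith [sq_nonneg r₀]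
  have hdne : r₀^2 + a^2 ≠ 0 := ne_of_gt hden
  have hbpos : 0 < b := by
    rw [hb]; nlinarith [mul_nonneg hΛ.le (sq_nonneg a)]
  -- generic positivity lemma
  have key : ∀ r θ : ℝ, μ r = 0 → 0 < r → r^2 ≠ r₀^2 → sin θ ≠ 0 → 0 < Q r θ := by
    intro r θ hμ0 hrpos hne hs
    rw [hQ, hμ0]
    have hρ : 0 < r^2 + a^2*(cos θ)^2 := by
      nlinarith [pow_pos hrpos 2, mul_nonneg (sq_nonneg a) (sq_nonneg (cos θ))]
    have hcθ : 0 < c θ := by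
      rw [hc]
      nlinarith [mul_nonneg (mul_nonneg hΛ.le (sq_nonneg a)) (sq_nonneg (cos θ))]
    have hsq : 0 < (sin θ)^2 := pow_two_pos_of_ne_zero hs
    have hfac : a - (r^2 + a^2)*a/(r₀^2 + a^2) = a*(r₀^2 - r^2)/(r₀^2 + a^2) := by
      field_simp; ring
    have hfne : a - (r^2 + a^2)*a/(r₀^2 + a^2) ≠ 0 := by
      rw [hfac]
      exact div_ne_zero (mul_ne_zero ha (sub_ne_zero_of_ne (Ne.symm hne))) hdne
    have hsq2 : 0 < (a - (r^2 + a^2)*a/(r₀^2 + a^2))^2 := pow_two_pos_of_ne_zero hfne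
    have hmain : 0 < c θ*(sin θ)^2*(a - (r^2 + a^2)*a/(r₀^2 + a^2))^2 :=
      mul_pos (mul_pos hcθ hsq) hsq2
    have h0 : (0:ℝ) < 1/(b^2*(r^2 + a^2*(cos θ)^2)) :=
      div_pos one_pos (mul_pos (pow_pos hbpos 2) hρ)
    calc (0:ℝ) < 1/(b^2*(r^2 + a^2*(cos θ)^2)) *
        (c θ*(sin θ)^2*(a - (r^2 + a^2)*a/(r₀^2 + a^2))^2) := mul_pos h0 hmain
      _ = 1/(b^2*(r^2 + a^2*(cos θ)^2)) *
        (c θ*(sin θ)^2*(a - (r^2 + a^2)*a/(r₀^2 + a^2))^2 - 0*(1 - a^2*(sin θ)^2/(r₀^2 + a^2))^2) := by ring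
  -- zero lemma
  have keyz : ∀ r θ : ℝ, μ r = 0 → r₀^2 = r^2 → Q r θ = 0 := by
    intro r θ hμ0 hr0
    rw [hQ, hμ0, hr0]
    have hne : r^2 + a^2 ≠ 0 := by nlinarith [sq_nonneg r]
    have hz : a - (r^2 + a^2)*a/(r^2 + a^2) = 0 := by
      rw [mul_comm, mul_div_assoc, div_self hne, mul_one, sub_self]
    rw [hz]; ring
  refine ⟨?_, ?_, ?_⟩
  · intro hlt1 hlt2 θ hs
    have e1 : re^2 ≠ r₀^2 := ne_of_lt (pow_lt_pow_left₀ hlt1 hre.le (by norm_num))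
    have e2 : rc^2 ≠ r₀^2 := ne_of_gt (pow_lt_pow_left₀ hlt2 hr0pos.le (by norm_num))
    exact ⟨key re θ hμre hre e1 hs, key rc θ hμrc hrc e2 hs⟩
  · intro heq
    exact ⟨fun θ => keyz re θ hμre (by rw [heq]),
      fun θ hs => key rc θ hμrc hrc
        (by rw [heq]; exact ne_of_gt (pow_lt_pow_left₀ h3 hre.le (by norm_num))) hs⟩
  · intro heq
    exact ⟨fun θ => keyz rc θ hμrc (by rw [heq]),
      fun θ hs => key re θ hμre hre
        (by rw [heq]; exact ne_of_lt (pow_lt_pow_left₀ h3 hre.le (by norm_num))) hs⟩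
end

section
/- The horizons are lightlike hypersurfaces: for every θ and every horizon-tangent vector (v_t, v_φ, v_θ) ∈ ℝ³ (i.e., with vanishing ∂_r-component), the extended Kerr–de Sitter quadratic form at r = r_e reduces (using μ(r_e) = 0) to S(v) = (c(θ)sin²θ/(b²ρ²(r_e,θ)))·(a·v_t − (r_e²+a²)v_φ)² + (ρ²(r_e,θ)/c(θ))·v_θ², which is nonnegative; moreover, if sin θ ≠ 0, then S(v) = 0 if and only if v_θ = 0 and v_φ = a·v_t/(r_e²+a²), i.e., if and only if v is a multiple of the horizon Killing field ∂_{t₊} + (a/(r_e²+a²))∂_{φ₊}. The analogous statement holds at r = r_c. -/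
/-!
On a horizon `μ(r) = 0`, so for a vector with `v_r = 0` only the two manifestly nonnegative
terms of `g₊` survive. Both weights are positive when `sin θ ≠ 0` and `ρ² > 0`, and `ρ² > 0`
because the horizon radii are nonzero: comparing coefficients of `μ` with its factorisation,
the four roots sum to zero, which rules out `r_c = 0`, and `Λ e₃ = -6m < 0`, which rules out
`r_e = 0` (then `e₃ = r₋ r_C r_c > 0`).
-/

open Real

lemma depressed_quartic_vieta {k p q s r₁ r₂ r₃ r₄ : ℝ} (hk : k ≠ 0)
    (h : ∀ x, k*x^4 + p*x^2 + q*x + s = k*(x - r₁)*(x - r₂)*(x - r₃)*(x - r₄)) :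
    r₁ + r₂ + r₃ + r₄ = 0 ∧ k*(r₁*r₂*r₃ + r₁*r₂*r₄ + r₁*r₃*r₄ + r₂*r₃*r₄) = -q := by
  constructor
  · have : k*(r₁ + r₂ + r₃ + r₄) = 0 := by
      linear_combination (1/12)*(h 2) - (1/12)*(h (-2)) - (1/6)*(h 1) + (1/6)*(h (-1))
    exact (mul_eq_zero.mp this).resolve_left hk
  · linear_combination (2/3)*(h 1) - (2/3)*(h (-1)) - (1/12)*(h 2) + (1/12)*(h (-2))

lemma kds_horizon_radii_ne_zero {Λ m a rm rC re rc : ℝ} (hΛ : 0 < Λ) (hm : 0 < m)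
    (hord : rm < rC ∧ rC < re ∧ re < rc)
    (h : ∀ x, -(Λ/3)*x^4 + (1 - Λ*a^2/3)*x^2 + (-2*m)*x + a^2
      = -(Λ/3)*(x - rm)*(x - rC)*(x - re)*(x - rc)) :
    re ≠ 0 ∧ rc ≠ 0 := by
  obtain ⟨h₁, h₂, h₃⟩ := hord
  obtain ⟨hsum, he₃⟩ := depressed_quartic_vieta (neg_ne_zero.mpr (by positivity)) h
  constructor
  · rintro rfl
    have : 0 < rm*rC*rc := mul_pos (mul_pos_of_neg_of_neg (by linarith) h₂) h₃
    nlinarith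
  · rintro rfl
    linarith

section HorizonForm

variable {Λ a b : ℝ} {c : ℝ → ℝ}

noncomputable def kdsHorizonForm (a b : ℝ) (c : ℝ → ℝ) (r θ v_t v_φ v_θ : ℝ) : ℝ :=
  (c θ*(sin θ)^2/(b^2*(r^2 + a^2*(cos θ)^2)))*(a*v_t - (r^2 + a^2)*v_φ)^2
    + ((r^2 + a^2*(cos θ)^2)/c θ)*v_θ^2

lemma kds_c_pos (hΛ : 0 ≤ Λ) (hc : ∀ θ, c θ = 1 + Λ*a^2/3*(cos θ)^2) (θ : ℝ) : 0 < c θ := by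
  rw [hc]; positivity

lemma kds_b_ne_zero (hΛ : 0 ≤ Λ) (hb : b = 1 + Λ*a^2/3) : b ≠ 0 := by
  rw [hb]; positivity

lemma mul_sq_add_mul_sq_eq_zero_iff {A B x y : ℝ} (hA : 0 < A) (hB : 0 < B) :
    A*x^2 + B*y^2 = 0 ↔ x = 0 ∧ y = 0 := by
  rw [add_eq_zero_iff_of_nonneg (by positivity) (by positivity)]
  simp [hA.ne', hB.ne']

lemma kdsHorizonForm_nonneg {θ : ℝ} (hcθ : 0 ≤ c θ) (r v_t v_φ v_θ : ℝ) :
    0 ≤ kdsHorizonForm a b c r θ v_t v_φ v_θ := by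
  unfold kdsHorizonForm; positivity

lemma kdsHorizonForm_eq_zero_iff {r θ : ℝ} (hb : b ≠ 0) (hcθ : 0 < c θ) (hr : r ≠ 0)
    (hθ : sin θ ≠ 0) (v_t v_φ v_θ : ℝ) :
    kdsHorizonForm a b c r θ v_t v_φ v_θ = 0 ↔ v_θ = 0 ∧ v_φ = a*v_t/(r^2 + a^2) := by
  have hρ : 0 < r^2 + a^2*(cos θ)^2 := by positivity
  have hra : r^2 + a^2 ≠ 0 := by positivity
  rw [kdsHorizonForm, mul_sq_add_mul_sq_eq_zero_iff (by positivity) (by positivity),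
    sub_eq_zero, eq_div_iff hra, mul_comm v_φ, and_comm, eq_comm (a := a*v_t)]

lemma kds_form_eq_horizonForm_of_root {f μ : ℝ → ℝ} {gp : ℝ → ℝ → ℝ → ℝ → ℝ → ℝ → ℝ}
    (hgp : ∀ r θ v_t v_r v_φ v_θ,
      gp r θ v_t v_r v_φ v_θ
        = (r^2 + a^2*(cos θ)^2)*((1 - (f r)^2)/μ r)*v_r^2
          - (2*f r/b)*(v_t - a*(sin θ)^2*v_φ)*v_r
          - (μ r/(b^2*(r^2 + a^2*(cos θ)^2)))*(v_t - a*(sin θ)^2*v_φ)^2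
          + (c θ*(sin θ)^2/(b^2*(r^2 + a^2*(cos θ)^2)))*(a*v_t - (r^2 + a^2)*v_φ)^2
          + ((r^2 + a^2*(cos θ)^2)/c θ)*v_θ^2)
    {r : ℝ} (hμr : μ r = 0) (θ v_t v_φ v_θ : ℝ) :
    gp r θ v_t 0 v_φ v_θ = kdsHorizonForm a b c r θ v_t v_φ v_θ := by
  rw [hgp, hμr, kdsHorizonForm]; ring

end HorizonForm

theorem horizons_lightlike_general
    (Λ m a rm rC re rc : ℝ) (hΛ : 0 < Λ) (hm : 0 < m)
    (μ : ℝ → ℝ)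
    (hμ : ∀ r, μ r = -(Λ/3)*r^4 + (1 - Λ*a^2/3)*r^2 - 2*m*r + a^2)
    (hord : rm < rC ∧ rC < re ∧ re < rc)
    (hroots : ∀ r, μ r = -(Λ/3)*(r - rm)*(r - rC)*(r - re)*(r - rc))
    (b : ℝ) (hb : b = 1 + Λ*a^2/3)
    (c : ℝ → ℝ) (hc : ∀ θ, c θ = 1 + Λ*a^2/3*(cos θ)^2)
    (f : ℝ → ℝ)
    (gp : ℝ → ℝ → ℝ → ℝ → ℝ → ℝ → ℝ)
    (hgp : ∀ r θ v_t v_r v_φ v_θ,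
      gp r θ v_t v_r v_φ v_θ
        = (r^2 + a^2*(cos θ)^2)*((1 - (f r)^2)/μ r)*v_r^2
          - (2*f r/b)*(v_t - a*(sin θ)^2*v_φ)*v_r
          - (μ r/(b^2*(r^2 + a^2*(cos θ)^2)))*(v_t - a*(sin θ)^2*v_φ)^2
          + (c θ*(sin θ)^2/(b^2*(r^2 + a^2*(cos θ)^2)))*(a*v_t - (r^2 + a^2)*v_φ)^2
          + ((r^2 + a^2*(cos θ)^2)/c θ)*v_θ^2) :
    ∀ θ v_t v_φ v_θ : ℝ,
      (let S : ℝ := (c θ*(sin θ)^2/(b^2*(re^2 + a^2*(cos θ)^2)))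
            *(a*v_t - (re^2 + a^2)*v_φ)^2
          + ((re^2 + a^2*(cos θ)^2)/c θ)*v_θ^2
       gp re θ v_t 0 v_φ v_θ = S ∧ 0 ≤ S ∧
        (sin θ ≠ 0 → (S = 0 ↔ v_θ = 0 ∧ v_φ = a*v_t/(re^2 + a^2)))) ∧
      (let S : ℝ := (c θ*(sin θ)^2/(b^2*(rc^2 + a^2*(cos θ)^2)))
            *(a*v_t - (rc^2 + a^2)*v_φ)^2
          + ((rc^2 + a^2*(cos θ)^2)/c θ)*v_θ^2
       gp rc θ v_t 0 v_φ v_θ = S ∧ 0 ≤ S ∧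
        (sin θ ≠ 0 → (S = 0 ↔ v_θ = 0 ∧ v_φ = a*v_t/(rc^2 + a^2)))) := by
  have hfactor : ∀ x, -(Λ/3)*x^4 + (1 - Λ*a^2/3)*x^2 + (-2*m)*x + a^2
      = -(Λ/3)*(x - rm)*(x - rC)*(x - re)*(x - rc) := fun x => by
    rw [← hroots, hμ]; ring
  obtain ⟨hre, hrc⟩ := kds_horizon_radii_ne_zero hΛ hm hord hfactor
  have hb0 := kds_b_ne_zero hΛ.le hb
  have hcθ := kds_c_pos hΛ.le hc
  have horizon : ∀ r, r ≠ 0 → μ r = 0 → ∀ θ v_t v_φ v_θ,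
      gp r θ v_t 0 v_φ v_θ = kdsHorizonForm a b c r θ v_t v_φ v_θ ∧
      0 ≤ kdsHorizonForm a b c r θ v_t v_φ v_θ ∧
      (sin θ ≠ 0 → (kdsHorizonForm a b c r θ v_t v_φ v_θ = 0 ↔
        v_θ = 0 ∧ v_φ = a*v_t/(r^2 + a^2))) :=
    fun r hr hμr θ v_t v_φ v_θ =>
      ⟨kds_form_eq_horizonForm_of_root hgp hμr θ v_t v_φ v_θ,
        kdsHorizonForm_nonneg (hcθ θ).le r v_t v_φ v_θ,
        fun hθ => kdsHorizonForm_eq_zero_iff hb0 (hcθ θ) hr hθ v_t v_φ v_θ⟩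
  intro θ v_t v_φ v_θ
  exact ⟨horizon re hre (by rw [hroots]; ring) θ v_t v_φ v_θ,
    horizon rc hrc (by rw [hroots]; ring) θ v_t v_φ v_θ⟩

/-- The horizons are lightlike hypersurfaces: for every `θ` and every
horizon-tangent vector `(v_t, v_φ, v_θ)` (vanishing `∂_r`-component), the extended
Kerr–de Sitter quadratic form `g₊` at `r = r_e` reduces (using `μ(r_e) = 0`) to
`S(v) = (c sin²θ/(b²ρ²))(a·v_t − (r_e²+a²)v_φ)² + (ρ²/c)v_θ² ≥ 0`; and if `sin θ ≠ 0`,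
then `S(v) = 0` iff `v_θ = 0` and `v_φ = a·v_t/(r_e²+a²)`, i.e. iff `v` is a multiple of
the horizon Killing field `∂_{t₊} + (a/(r_e²+a²))∂_{φ₊}`. Analogously at `r = r_c`. -/
theorem horizons_lightlike
    (Λ m a rm rC re rc : ℝ) (hΛ : 0 < Λ) (hm : 0 < m)
    (μ : ℝ → ℝ)
    (hμ : ∀ r, μ r = -(Λ/3)*r^4 + (1 - Λ*a^2/3)*r^2 - 2*m*r + a^2)
    (hord : rm < rC ∧ rC < re ∧ re < rc)
    (hroots : ∀ r, μ r = -(Λ/3)*(r - rm)*(r - rC)*(r - re)*(r - rc))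
    (b : ℝ) (hb : b = 1 + Λ*a^2/3)
    (c : ℝ → ℝ) (hc : ∀ θ, c θ = 1 + Λ*a^2/3*(cos θ)^2)
    (f : ℝ → ℝ) (hfe : f re = -1) (hfc : f rc = 1)
    (gp : ℝ → ℝ → ℝ → ℝ → ℝ → ℝ → ℝ)
    (hgp : ∀ r θ v_t v_r v_φ v_θ,
      gp r θ v_t v_r v_φ v_θ
        = (r^2 + a^2*(cos θ)^2)*((1 - (f r)^2)/μ r)*v_r^2
          - (2*f r/b)*(v_t - a*(sin θ)^2*v_φ)*v_r
          - (μ r/(b^2*(r^2 + a^2*(cos θ)^2)))*(v_t - a*(sin θ)^2*v_φ)^2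
          + (c θ*(sin θ)^2/(b^2*(r^2 + a^2*(cos θ)^2)))*(a*v_t - (r^2 + a^2)*v_φ)^2
          + ((r^2 + a^2*(cos θ)^2)/c θ)*v_θ^2) :
    ∀ θ v_t v_φ v_θ : ℝ,
      (let S : ℝ := (c θ*(sin θ)^2/(b^2*(re^2 + a^2*(cos θ)^2)))
            *(a*v_t - (re^2 + a^2)*v_φ)^2
          + ((re^2 + a^2*(cos θ)^2)/c θ)*v_θ^2
       gp re θ v_t 0 v_φ v_θ = S ∧ 0 ≤ S ∧
        (sin θ ≠ 0 → (S = 0 ↔ v_θ = 0 ∧ v_φ = a*v_t/(re^2 + a^2)))) ∧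
      (let S : ℝ := (c θ*(sin θ)^2/(b^2*(rc^2 + a^2*(cos θ)^2)))
            *(a*v_t - (rc^2 + a^2)*v_φ)^2
          + ((rc^2 + a^2*(cos θ)^2)/c θ)*v_θ^2
       gp rc θ v_t 0 v_φ v_θ = S ∧ 0 ≤ S ∧
        (sin θ ≠ 0 → (S = 0 ↔ v_θ = 0 ∧ v_φ = a*v_t/(rc^2 + a^2)))) :=
  horizons_lightlike_general Λ m a rm rC re rc hΛ hm μ hμ hord hroots b hb c hc f gp hgp
end

section
/- Along the Hamiltonian flow of q, one has H_q r = ∂_{ξ_r} q = 2μ(r)ξ_r at every point of the domain; and at every point with ξ_r = 0, the second derivative of r along the flow satisfies H_q² r = 2μ(r)·(−∂_r q) = 2μ(r)b²·(d/dr)[((r²+a²)ξ_t + a·ξ_φ)²/μ(r)]. If moreover the covector is T-orthogonal (ξ_t + (a/(r₀²+a²))ξ_φ = 0) with a·ξ_φ ≠ 0, then at such points H_q² r has the same sign as r − r₀. -/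
open Real

private lemma deriv_Msq (M C x : ℝ) : deriv (fun s => M*s^2 + C) x = 2*M*x := by
  simp [deriv_add_const]
  ring

private lemma Bv_pos (p u v r : ℝ) (hp : 0 < p) (hpu : p < u) (hur : u < r) (hrv : r < v) :
    0 < (v^2 - (p+u+v)^2)*((r-p)*(r-u)) + (v^2 - p^2)*((r+p+u+v)*(r-u))
      + (v^2 - u^2)*((r+p+u+v)*(r-p)) := by
  have hs : 0 < r + p + u + v := by linarith
  have c1 : (p+v)*((r-p)*((r+p+u+v)*(r-u))) < (v^2 - p^2)*((r+p+u+v)*(r-u)) := by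
    nlinarith [mul_pos (mul_pos hs (by linarith : (0:ℝ) < r - u)) (by linarith : (0:ℝ) < v - r),
      mul_pos hs (by linarith : (0:ℝ) < r - u)]
  have c2 : (u+v)*((r-u)*((r+p+u+v)*(r-p))) < (v^2 - u^2)*((r+p+u+v)*(r-p)) := by
    nlinarith [mul_pos (mul_pos hs (by linarith : (0:ℝ) < r - p)) (by linarith : (0:ℝ) < v - r)]
  have c3 : -((p+u+2*v)*((r+p+u+v)*((r-p)*(r-u)))) < (v^2 - (p+u+v)^2)*((r-p)*(r-u)) := by
    nlinarith [mul_pos (mul_pos (by linarith : (0:ℝ) < p+u+2*v)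
      (mul_pos (by linarith : (0:ℝ) < r-p) (by linarith : (0:ℝ) < r-u)))
      (by linarith : (0:ℝ) < r + v)]
  nlinarith [c1, c2, c3]

private lemma Bu_neg (p u v r : ℝ) (hp : 0 < p) (hpu : p < u) (hur : u < r) (hrv : r < v) :
    (u^2 - (p+u+v)^2)*((r-p)*(r-v)) + (u^2 - p^2)*((r+p+u+v)*(r-v))
      + (u^2 - v^2)*((r+p+u+v)*(r-p)) < 0 := by
  have hs : 0 < r + p + u + v := by linarith
  have key : (p+v)*((p+2*u+v)*(v-r)) < (u+v)*((v-u)*(r+p+u+v)) := by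
    nlinarith [mul_pos (by linarith : (0:ℝ) < u - p) (by linarith : (0:ℝ) < p+2*u+v),
      mul_pos (by linarith : (0:ℝ) < u + v) (by linarith : (0:ℝ) < r - u),
      mul_pos (mul_pos (by linarith : (0:ℝ) < u - p) (by linarith : (0:ℝ) < p+2*u+v)) (by linarith : (0:ℝ) < v - u),
      mul_pos (mul_pos (by linarith : (0:ℝ) < u + v) (by linarith : (0:ℝ) < r - u)) (by linarith : (0:ℝ) < v - u),
      mul_pos (mul_pos (by linarith : (0:ℝ) < u - p) (by linarith : (0:ℝ) < p+2*u+v)) (by linarith : (0:ℝ) < v - r),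
      mul_pos (mul_pos (by linarith : (0:ℝ) < u + v) (by linarith : (0:ℝ) < r - u)) (by linarith : (0:ℝ) < v - r)]
  nlinarith [mul_pos (by linarith : (0:ℝ) < r - p) (sub_pos.2 key),
    mul_pos (mul_pos (by nlinarith : (0:ℝ) < u^2 - p^2) hs) (by linarith : (0:ℝ) < v - r)]

private lemma Wneg (p u v r r₀ : ℝ) (hp : 0 < p) (hpu : p < u) (hur : u < r) (hrv : r < v)
    (hu0 : u ≤ r₀) (h0v : r₀ ≤ v) :
    (r₀^2 - (p+u+v)^2)*((r-p)*(r-u)*(r-v))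
      + (r₀^2 - p^2)*((r+p+u+v)*(r-u)*(r-v))
      + (r₀^2 - u^2)*((r+p+u+v)*(r-p)*(r-v))
      + (r₀^2 - v^2)*((r+p+u+v)*(r-p)*(r-u)) < 0 := by
  have hBv := Bv_pos p u v r hp hpu hur hrv
  have hBu := Bu_neg p u v r hp hpu hur hrv
  have hWv : (v^2 - (p+u+v)^2)*((r-p)*(r-u)*(r-v))
      + (v^2 - p^2)*((r+p+u+v)*(r-u)*(r-v))
      + (v^2 - u^2)*((r+p+u+v)*(r-p)*(r-v))
      + (v^2 - v^2)*((r+p+u+v)*(r-p)*(r-u)) < 0 := by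
    have e : (v^2 - (p+u+v)^2)*((r-p)*(r-u)*(r-v))
      + (v^2 - p^2)*((r+p+u+v)*(r-u)*(r-v))
      + (v^2 - u^2)*((r+p+u+v)*(r-p)*(r-v))
      + (v^2 - v^2)*((r+p+u+v)*(r-p)*(r-u))
      = (r-v)*((v^2 - (p+u+v)^2)*((r-p)*(r-u)) + (v^2 - p^2)*((r+p+u+v)*(r-u))
      + (v^2 - u^2)*((r+p+u+v)*(r-p))) := by ring
    rw [e]
    exact mul_neg_of_neg_of_pos (by linarith) hBv
  have hWu : (u^2 - (p+u+v)^2)*((r-p)*(r-u)*(r-v))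
      + (u^2 - p^2)*((r+p+u+v)*(r-u)*(r-v))
      + (u^2 - u^2)*((r+p+u+v)*(r-p)*(r-v))
      + (u^2 - v^2)*((r+p+u+v)*(r-p)*(r-u)) < 0 := by
    have e : (u^2 - (p+u+v)^2)*((r-p)*(r-u)*(r-v))
      + (u^2 - p^2)*((r+p+u+v)*(r-u)*(r-v))
      + (u^2 - u^2)*((r+p+u+v)*(r-p)*(r-v))
      + (u^2 - v^2)*((r+p+u+v)*(r-p)*(r-u))
      = (r-u)*((u^2 - (p+u+v)^2)*((r-p)*(r-v)) + (u^2 - p^2)*((r+p+u+v)*(r-v))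
      + (u^2 - v^2)*((r+p+u+v)*(r-p))) := by ring
    rw [e]
    exact mul_neg_of_pos_of_neg (by linarith) hBu
  have hu2 : u^2 ≤ r₀^2 := by nlinarith
  have hv2 : r₀^2 ≤ v^2 := by nlinarith
  rcases le_or_gt 0 ((r-p)*(r-u)*(r-v) + (r+p+u+v)*(r-u)*(r-v) + (r+p+u+v)*(r-p)*(r-v)
      + (r+p+u+v)*(r-p)*(r-u)) with hA | hA
  · nlinarith [mul_nonneg hA (by linarith : (0:ℝ) ≤ v^2 - r₀^2)]
  · nlinarith [mul_nonneg (le_of_lt (neg_pos.2 hA)) (by linarith : (0:ℝ) ≤ r₀^2 - u^2)]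

private lemma rC_pos (Λ m a rm rC re rc : ℝ) (hΛ : 0 < Λ) (hm : 0 < m) (ha2 : 0 < a^2)
    (h1 : rm < rC) (h2 : rC < re) (h3 : re < rc)
    (hE1 : rm + rC + re + rc = 0)
    (hE3 : Λ*(rm*rC*re + rm*rC*rc + rm*re*rc + rC*re*rc) = -6*m)
    (hE4 : Λ*(rm*rC*re*rc) = -3*a^2) : 0 < rC := by
  have hrm0 : rm < 0 := by
    by_contra h
    push_neg at h
    nlinarith [hE4, ha2, mul_nonneg (mul_nonneg (mul_nonneg h
      (by linarith : (0:ℝ) ≤ rC)) (by linarith : (0:ℝ) ≤ re)) (by linarith : (0:ℝ) ≤ rc)]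
  by_contra h
  push_neg at h
  rcases le_or_gt re 0 with hre | hre
  · rcases eq_or_lt_of_le hre with hre' | hre'
    · rw [hre'] at hE4
      nlinarith [hE4, ha2]
    · have hx : (0:ℝ) < -rm := by linarith
      have hy : (0:ℝ) < -rC := by linarith
      have hz : (0:ℝ) < -re := by linarith
      have hrc' : rc = -(rm + rC + re) := by linarith
      have hkey : 0 < rm*rC*re + rm*rC*rc + rm*re*rc + rC*re*rc := by
        rw [hrc']
        nlinarith [mul_pos (mul_pos hx hy) hz, mul_pos (mul_pos hx hx) hy,
          mul_pos (mul_pos hx hx) hz, mul_pos (mul_pos hx hy) hy,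
          mul_pos (mul_pos hy hy) hz, mul_pos (mul_pos hx hz) hz,
          mul_pos (mul_pos hy hz) hz, mul_pos (mul_pos hy hy) hx]
      nlinarith [hE3, mul_pos hΛ hkey]
  · nlinarith [hE4, ha2, mul_nonneg (mul_nonneg (mul_nonneg (neg_nonneg.2 hrm0.le)
      (neg_nonneg.2 h)) hre.le) (hre.trans h3).le]

/-- The Hamiltonian vector field of `q` applied to a function `f` of
`(r, θ, ξ_r, ξ_θ)` (the variables `t, φ` are cyclic and `ξ_t, ξ_φ` are fixed
parameters): `H_q f = (∂_{ξ_r}q)∂_r f + (∂_{ξ_θ}q)∂_θ f − (∂_r q)∂_{ξ_r} f − (∂_θ q)∂_{ξ_θ} f`. -/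
noncomputable def HamVF (q f : ℝ → ℝ → ℝ → ℝ → ℝ) (r θ ξr ξθ : ℝ) : ℝ :=
    (deriv (fun s => q r θ s ξθ) ξr)*(deriv (fun s => f s θ ξr ξθ) r)
  + (deriv (fun s => q r θ ξr s) ξθ)*(deriv (fun s => f r s ξr ξθ) θ)
  - (deriv (fun s => q s θ ξr ξθ) r)*(deriv (fun s => f r θ s ξθ) ξr)
  - (deriv (fun s => q r s ξr ξθ) θ)*(deriv (fun s => f r θ ξr s) ξθ)

/-- Along the Hamiltonian flow of the rescaled dual metric `q`,
`H_q r = ∂_{ξ_r}q = 2μ(r)ξ_r`; at points with `ξ_r = 0`,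
`H_q² r = 2μ(r)(−∂_r q) = 2μ(r)b²·(d/dr)[((r²+a²)ξ_t + a ξ_φ)²/μ(r)]`; and if moreover
the covector is T-orthogonal with `a·ξ_φ ≠ 0`, then at such points `H_q² r` has the
same sign as `r − r₀`. -/
theorem Hamiltonian_convexity_r
    (Λ m a rm rC re rc : ℝ) (hΛ : 0 < Λ) (hm : 0 < m)
    (μ : ℝ → ℝ)
    (hμ : ∀ r, μ r = -(Λ/3)*r^4 + (1 - Λ*a^2/3)*r^2 - 2*m*r + a^2)
    (hord : rm < rC ∧ rC < re ∧ re < rc)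
    (hroots : ∀ r, μ r = -(Λ/3)*(r - rm)*(r - rC)*(r - re)*(r - rc))
    (b : ℝ) (hb : b = 1 + Λ*a^2/3)
    (c : ℝ → ℝ) (hc : ∀ θ, c θ = 1 + Λ*a^2/3*(cos θ)^2)
    (r₀ : ℝ) (hr₀ : re ≤ r₀ ∧ r₀ ≤ rc)
    (q : ℝ → ℝ → ℝ → ℝ → ℝ → ℝ → ℝ)
    (hq : ∀ r θ ξt ξr ξφ ξθ, q r θ ξt ξr ξφ ξθ
      = μ r*ξr^2 + (b^2/(c θ*(sin θ)^2))*(a*(sin θ)^2*ξt + ξφ)^2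
        - (b^2/μ r)*((r^2 + a^2)*ξt + a*ξφ)^2 + c θ*ξθ^2)
    (r θ ξt ξr ξφ ξθ : ℝ) (hr : re < r ∧ r < rc) (hθ : 0 < θ ∧ θ < π) :
    let qf : ℝ → ℝ → ℝ → ℝ → ℝ := fun r' θ' ξr' ξθ' => q r' θ' ξt ξr' ξφ ξθ'
    let HqR : ℝ → ℝ → ℝ → ℝ → ℝ := fun r' θ' ξr' ξθ' =>
      HamVF qf (fun x _ _ _ => x) r' θ' ξr' ξθ'
    let Hq2R : ℝ := HamVF qf HqR r θ ξr ξθ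
    (HqR r θ ξr ξθ = deriv (fun s => q r θ ξt s ξφ ξθ) ξr ∧
      HqR r θ ξr ξθ = 2*μ r*ξr) ∧
    (ξr = 0 →
      Hq2R = 2*μ r*(-(deriv (fun s => q s θ ξt 0 ξφ ξθ) r)) ∧
      Hq2R = 2*μ r*b^2*deriv (fun s => ((s^2 + a^2)*ξt + a*ξφ)^2/μ s) r) ∧
    (ξr = 0 → ξt + (a/(r₀^2 + a^2))*ξφ = 0 → a*ξφ ≠ 0 →
      (r < r₀ → Hq2R < 0) ∧ (r₀ < r → 0 < Hq2R) ∧ (r = r₀ → Hq2R = 0)) := by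
  intro qf HqR Hq2R
  obtain ⟨h1, h2, h3⟩ := hord
  obtain ⟨hrel, hrrc⟩ := hr
  obtain ⟨hr₀e, hr₀c⟩ := hr₀
  have hμpos : 0 < μ r := by
    rw [hroots r]
    nlinarith [mul_pos (mul_pos (mul_pos (show (0:ℝ) < r - rm by linarith)
      (show (0:ℝ) < r - rC by linarith)) (show (0:ℝ) < r - re by linarith))
      (show (0:ℝ) < rc - r by linarith), hΛ]
  have hμr : μ r ≠ 0 := ne_of_gt hμpos
  -- H_q r = 2 μ(r') ξr'  at every point
  have hHqR : ∀ r' θ' ξr' ξθ' : ℝ, HqR r' θ' ξr' ξθ' = 2*μ r'*ξr' := by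
    intro r' θ' ξr' ξθ'
    show (deriv (fun s => qf r' θ' s ξθ') ξr')*(deriv (fun s => s) r')
      + (deriv (fun s => qf r' θ' ξr' s) ξθ')*(deriv (fun _ => r') θ')
      - (deriv (fun s => qf s θ' ξr' ξθ') r')*(deriv (fun _ => r') ξr')
      - (deriv (fun s => qf r' s ξr' ξθ') θ')*(deriv (fun _ => r') ξθ') = 2*μ r'*ξr'
    have hfe : (fun s => qf r' θ' s ξθ') = fun s => μ r'*s^2
        + (b^2/(c θ'*(sin θ')^2)*(a*(sin θ')^2*ξt + ξφ)^2
          - b^2/μ r'*((r'^2 + a^2)*ξt + a*ξφ)^2 + c θ'*ξθ'^2) := by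
      funext s
      show q r' θ' ξt s ξφ ξθ' = _
      rw [hq]; ring
    rw [hfe]
    simp only [deriv_id'', deriv_const', deriv_const, mul_one, mul_zero, add_zero, sub_zero]
    exact deriv_Msq _ _ _
  -- derivative of q in ξr
  have hderivq : deriv (fun s => q r θ ξt s ξφ ξθ) ξr = 2*μ r*ξr := by
    have hfe : (fun s => q r θ ξt s ξφ ξθ) = fun s => μ r*s^2
        + (b^2/(c θ*(sin θ)^2)*(a*(sin θ)^2*ξt + ξφ)^2
          - b^2/μ r*((r^2 + a^2)*ξt + a*ξφ)^2 + c θ*ξθ^2) := by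
      funext s; rw [hq]; ring
    rw [hfe]
    exact deriv_Msq _ _ _
  -- second application of the Hamilton field, at ξr = 0
  have hq2val : HamVF qf HqR r θ 0 ξθ = 2*μ r*(-(deriv (fun s => q s θ ξt 0 ξφ ξθ) r)) := by
    show (deriv (fun s => qf r θ s ξθ) 0)*(deriv (fun s => HqR s θ 0 ξθ) r)
      + (deriv (fun s => qf r θ 0 s) ξθ)*(deriv (fun s => HqR r s 0 ξθ) θ)
      - (deriv (fun s => qf s θ 0 ξθ) r)*(deriv (fun s => HqR r θ s ξθ) 0)
      - (deriv (fun s => qf r s 0 ξθ) θ)*(deriv (fun s => HqR r θ 0 s) ξθ) = _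
    have e1 : (fun s => HqR s θ 0 ξθ) = fun _ => (0:ℝ) := by funext s; rw [hHqR]; ring
    have e2 : (fun s => HqR r s 0 ξθ) = fun _ => (0:ℝ) := by funext s; rw [hHqR]; ring
    have e3 : (fun s => HqR r θ s ξθ) = fun s => 2*μ r*s := by funext s; rw [hHqR]
    have e4 : (fun s => HqR r θ 0 s) = fun _ => (0:ℝ) := by funext s; rw [hHqR]; ring
    have e5 : (fun s => qf s θ 0 ξθ) = (fun s => q s θ ξt 0 ξφ ξθ) := rfl
    rw [e1, e2, e3, e4, e5]
    have e6 : deriv (fun s => 2*μ r*s) 0 = 2*μ r := by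
      have h := ((hasDerivAt_id (0:ℝ)).const_mul (2*μ r)).deriv
      exact h.trans (mul_one _)
    rw [e6]
    simp only [deriv_const', deriv_const, mul_zero, zero_add, add_zero, zero_sub, sub_zero]
    ring
  -- derivative of μ
  have hfe0 : μ = fun x => -(Λ/3)*((x - rm)*(x - rC)*(x - re)*(x - rc)) := by
    funext x; rw [hroots x]; ring
  have hlin : ∀ t : ℝ, HasDerivAt (fun x : ℝ => x - t) 1 r := fun t => (hasDerivAt_id r).sub_const t
  have hμd : HasDerivAt μ (-(Λ/3)*((r-rC)*(r-re)*(r-rc) + (r-rm)*(r-re)*(r-rc) + (r-rm)*(r-rC)*(r-rc) + (r-rm)*(r-rC)*(r-re))) r := by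
    have hval : (-(Λ/3)*((r-rC)*(r-re)*(r-rc) + (r-rm)*(r-re)*(r-rc) + (r-rm)*(r-rC)*(r-rc) + (r-rm)*(r-rC)*(r-re)))
        = -(Λ/3)*(((1*(r - rC) + (r - rm)*1)*(r - re) + (r - rm)*(r - rC)*1)*(r - rc)
          + (r - rm)*(r - rC)*(r - re)*1) := by ring
    rw [hval, hfe0]
    exact ((((hlin rm).mul (hlin rC)).mul (hlin re)).mul (hlin rc)).const_mul (-(Λ/3))
  -- derivative of ((s²+a²)ξt + aξφ)²
  have ht1 : HasDerivAt (fun s : ℝ => (s^2 + a^2)*ξt + a*ξφ) (((2:ℕ):ℝ)*r^1*ξt) r :=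
    (((hasDerivAt_pow 2 r).add_const (a^2)).mul_const ξt).add_const (a*ξφ)
  have hKd : HasDerivAt (fun s : ℝ => ((s^2 + a^2)*ξt + a*ξφ)^2)
      (2*((r^2 + a^2)*ξt + a*ξφ)*(2*r*ξt)) r := by
    have h := ht1.pow 2
    have e : (((2:ℕ):ℝ)*((r^2 + a^2)*ξt + a*ξφ)^(2-1)*(((2:ℕ):ℝ)*r^1*ξt))
        = 2*((r^2 + a^2)*ξt + a*ξφ)*(2*r*ξt) := by norm_num
    rw [← e]
    exact h
  have hgd : HasDerivAt (fun s => ((s^2 + a^2)*ξt + a*ξφ)^2/μ s) (((2*((r^2 + a^2)*ξt + a*ξφ)*(2*r*ξt))*μ r - ((r^2 + a^2)*ξt + a*ξφ)^2*(-(Λ/3)*((r-rC)*(r-re)*(r-rc) + (r-rm)*(r-re)*(r-rc) + (r-rm)*(r-rC)*(r-rc) + (r-rm)*(r-rC)*(r-re))))/μ r^2) r :=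
    hKd.div hμd hμr
  have hfe3 : (fun s => q s θ ξt 0 ξφ ξθ) = fun s => (b^2/(c θ*(sin θ)^2)*(a*(sin θ)^2*ξt + ξφ)^2 + c θ*ξθ^2)
      - b^2*(((s^2 + a^2)*ξt + a*ξφ)^2/μ s) := by
    funext s; rw [hq]; ring
  have hq_r : HasDerivAt (fun s => q s θ ξt 0 ξφ ξθ) (-(b^2*(((2*((r^2 + a^2)*ξt + a*ξφ)*(2*r*ξt))*μ r - ((r^2 + a^2)*ξt + a*ξφ)^2*(-(Λ/3)*((r-rC)*(r-re)*(r-rc) + (r-rm)*(r-re)*(r-rc) + (r-rm)*(r-rC)*(r-rc) + (r-rm)*(r-rC)*(r-re))))/μ r^2))) r := by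
    rw [hfe3]
    exact (hgd.const_mul (b^2)).const_sub (b^2/(c θ*(sin θ)^2)*(a*(sin θ)^2*ξt + ξφ)^2 + c θ*ξθ^2)
  have hdq : deriv (fun s => q s θ ξt 0 ξφ ξθ) r = -(b^2*(((2*((r^2 + a^2)*ξt + a*ξφ)*(2*r*ξt))*μ r - ((r^2 + a^2)*ξt + a*ξφ)^2*(-(Λ/3)*((r-rC)*(r-re)*(r-rc) + (r-rm)*(r-re)*(r-rc) + (r-rm)*(r-rC)*(r-rc) + (r-rm)*(r-rC)*(r-re))))/μ r^2)) := hq_r.deriv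
  have hq2D : HamVF qf HqR r θ 0 ξθ = 2*μ r*b^2*(((2*((r^2 + a^2)*ξt + a*ξφ)*(2*r*ξt))*μ r - ((r^2 + a^2)*ξt + a*ξφ)^2*(-(Λ/3)*((r-rC)*(r-re)*(r-rc) + (r-rm)*(r-re)*(r-rc) + (r-rm)*(r-rC)*(r-rc) + (r-rm)*(r-rC)*(r-re))))/μ r^2) := by
    rw [hq2val, hdq]; ring
  refine ⟨⟨(hHqR r θ ξr ξθ).trans hderivq.symm, hHqR r θ ξr ξθ⟩, fun hξr => ?_, fun hξr hT ha => ?_⟩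
  · constructor
    · show HamVF qf HqR r θ ξr ξθ = _
      rw [hξr]; exact hq2val
    · show HamVF qf HqR r θ ξr ξθ = _
      rw [hξr, hq2D, hgd.deriv]
  -- sign analysis
  · have ha' : a ≠ 0 := left_ne_zero_of_mul ha
    have ha2 : 0 < a^2 := by positivity
    have hden : 0 < r₀^2 + a^2 := by have := sq_nonneg r₀; linarith
    have hT'' : ξt*(r₀^2 + a^2) = -(a*ξφ) := by
      have h2T : ξt = -(a/(r₀^2 + a^2)*ξφ) := by linarith
      rw [h2T]
      field_simp
    have hξt0 : ξt ≠ 0 := by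
      intro h0
      apply ha
      rw [h0] at hT''
      linarith [hT'']
    have hKr2 : (r^2 + a^2)*ξt + a*ξφ = ξt*(r^2 - r₀^2) := by linear_combination hT''
    -- coefficient identities from the two expressions for μ
    have key : ∀ x : ℝ, -(Λ/3)*x^4 + (1 - Λ*a^2/3)*x^2 - 2*m*x + a^2
        = -(Λ/3)*(x - rm)*(x - rC)*(x - re)*(x - rc) :=
      fun x => (hμ x).symm.trans (hroots x)
    have hE1' : Λ*(rm + rC + re + rc) = 0 := by
      linear_combination (-1/4)*key 2 + (1/4)*key (-2) + (1/2)*key 1 + (-1/2)*key (-1)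
    have hE1 : rm + rC + re + rc = 0 :=
      (mul_eq_zero.mp hE1').resolve_left (ne_of_gt hΛ)
    have hs : rm = -(rC + re + rc) := by linarith
    have hE3 : Λ*(rm*rC*re + rm*rC*rc + rm*re*rc + rC*re*rc) = -6*m := by
      linear_combination (-2)*key 1 + 2*key (-1) + (1/4)*key 2 + (-1/4)*key (-2)
    have hE4 : Λ*(rm*rC*re*rc) = -3*a^2 := by
      linear_combination 3*key 0
    have hrC0 : 0 < rC := rC_pos Λ m a rm rC re rc hΛ hm ha2 h1 h2 h3 hE1 hE3 hE4
    have hre0 : 0 < re := hrC0.trans h2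
    have hr0pos : 0 < r₀ := lt_of_lt_of_le hre0 hr₀e
    have hrpos : 0 < r := hre0.trans hrel
    -- the convexity polynomial identity
    have hGW : (4*r*μ r - (r^2 - r₀^2)*(-(Λ/3)*((r-rC)*(r-re)*(r-rc) + (r-rm)*(r-re)*(r-rc) + (r-rm)*(r-rC)*(r-rc) + (r-rm)*(r-rC)*(r-re)))) = -(Λ/3)*((r₀^2 - (rC+re+rc)^2)*((r-rC)*(r-re)*(r-rc)) + (r₀^2 - rC^2)*((r+rC+re+rc)*(r-re)*(r-rc)) + (r₀^2 - re^2)*((r+rC+re+rc)*(r-rC)*(r-rc)) + (r₀^2 - rc^2)*((r+rC+re+rc)*(r-rC)*(r-re))) := by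
      rw [hroots r, hs]; ring
    have hW := Wneg rC re rc r r₀ hrC0 h2 hrel hrrc hr₀e hr₀c
    have hGpos : 0 < (4*r*μ r - (r^2 - r₀^2)*(-(Λ/3)*((r-rC)*(r-re)*(r-rc) + (r-rm)*(r-re)*(r-rc) + (r-rm)*(r-rC)*(r-rc) + (r-rm)*(r-rC)*(r-re)))) := by
      rw [hGW, show -(Λ/3)*((r₀^2 - (rC+re+rc)^2)*((r-rC)*(r-re)*(r-rc)) + (r₀^2 - rC^2)*((r+rC+re+rc)*(r-re)*(r-rc)) + (r₀^2 - re^2)*((r+rC+re+rc)*(r-rC)*(r-rc)) + (r₀^2 - rc^2)*((r+rC+re+rc)*(r-rC)*(r-re)))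
        = (Λ/3)*(-((r₀^2 - (rC+re+rc)^2)*((r-rC)*(r-re)*(r-rc)) + (r₀^2 - rC^2)*((r+rC+re+rc)*(r-re)*(r-rc)) + (r₀^2 - re^2)*((r+rC+re+rc)*(r-rC)*(r-rc)) + (r₀^2 - rc^2)*((r+rC+re+rc)*(r-rC)*(r-re)))) from by ring]
      exact mul_pos (div_pos hΛ (by norm_num)) (neg_pos.2 hW)
    have hDid : (2*((r^2 + a^2)*ξt + a*ξφ)*(2*r*ξt))*μ r - ((r^2 + a^2)*ξt + a*ξφ)^2*(-(Λ/3)*((r-rC)*(r-re)*(r-rc) + (r-rm)*(r-re)*(r-rc) + (r-rm)*(r-rC)*(r-rc) + (r-rm)*(r-rC)*(r-re)))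
        = ξt^2*(r^2 - r₀^2)*(4*r*μ r - (r^2 - r₀^2)*(-(Λ/3)*((r-rC)*(r-re)*(r-rc) + (r-rm)*(r-re)*(r-rc) + (r-rm)*(r-rC)*(r-rc) + (r-rm)*(r-rC)*(r-re)))) := by
      linear_combination (4*r*ξt*μ r - (-(Λ/3)*((r-rC)*(r-re)*(r-rc) + (r-rm)*(r-re)*(r-rc) + (r-rm)*(r-rC)*(r-rc) + (r-rm)*(r-rC)*(r-re)))*(((r^2 + a^2)*ξt + a*ξφ) + ξt*(r^2 - r₀^2)))*hKr2
    have hbpos : 0 < b := by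
      rw [hb]
      have : 0 ≤ Λ*a^2/3 := div_nonneg (mul_nonneg hΛ.le (sq_nonneg a)) (by norm_num)
      linarith
    have hξt2 : 0 < ξt^2 := pow_two_pos_of_ne_zero hξt0
    have hnum : 0 < 2*b^2*ξt^2*(4*r*μ r - (r^2 - r₀^2)*(-(Λ/3)*((r-rC)*(r-re)*(r-rc) + (r-rm)*(r-re)*(r-rc) + (r-rm)*(r-rC)*(r-rc) + (r-rm)*(r-rC)*(r-re)))) :=
      mul_pos (mul_pos (mul_pos two_pos (pow_pos hbpos 2)) hξt2) hGpos
    have hP : 0 < 2*b^2*ξt^2*(4*r*μ r - (r^2 - r₀^2)*(-(Λ/3)*((r-rC)*(r-re)*(r-rc) + (r-rm)*(r-re)*(r-rc) + (r-rm)*(r-rC)*(r-rc) + (r-rm)*(r-rC)*(r-re))))/μ r := div_pos hnum hμpos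
    have hfinalval : HamVF qf HqR r θ 0 ξθ
        = (2*b^2*ξt^2*(4*r*μ r - (r^2 - r₀^2)*(-(Λ/3)*((r-rC)*(r-re)*(r-rc) + (r-rm)*(r-re)*(r-rc) + (r-rm)*(r-rC)*(r-rc) + (r-rm)*(r-rC)*(r-re))))/μ r)*(r^2 - r₀^2) := by
      rw [hq2D, hDid]
      field_simp
    refine ⟨fun hlt => ?_, fun hgt => ?_, fun heq => ?_⟩
    · show HamVF qf HqR r θ ξr ξθ < 0
      rw [hξr, hfinalval]
      exact mul_neg_of_pos_of_neg hP (sub_neg.2 (pow_lt_pow_left₀ hlt hrpos.le two_ne_zero))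
    · show 0 < HamVF qf HqR r θ ξr ξθ
      rw [hξr, hfinalval]
      exact mul_pos hP (sub_pos.2 (pow_lt_pow_left₀ hgt hr0pos.le two_ne_zero))
    · show HamVF qf HqR r θ ξr ξθ = 0
      rw [hξr, hfinalval, heq]
      ring
end

section
/- If r₀ ∈ (r_e, r_c), θ ∈ (0, π), and the covector ξ = (ξ_t, ξ_r, ξ_φ, ξ_θ) satisfies both q(r₀, θ, ξ) = 0 and ξ_t + (a/(r₀²+a²))ξ_φ = 0, then ξ = 0. In other words, the T-orthogonal characteristic set of the Kerr–de Sitter wave operator does not meet the hypersurface {r = r₀}. -/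
open Real


private lemma kds_cubic_pos (x y z : ℝ) (hx : x < 0) (hy : y < 0) (hz : z < 0) :
    0 < x*y*z - (x*y + x*z + y*z)*(x + y + z) := by
  nlinarith [mul_pos (mul_pos (neg_pos.mpr hx) (neg_pos.mpr hy)) (neg_pos.mpr hz),
    mul_pos (mul_pos (neg_pos.mpr hx) (neg_pos.mpr hx)) (neg_pos.mpr hy),
    mul_pos (mul_pos (neg_pos.mpr hx) (neg_pos.mpr hx)) (neg_pos.mpr hz),
    mul_pos (mul_pos (neg_pos.mpr hx) (neg_pos.mpr hy)) (neg_pos.mpr hy),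
    mul_pos (mul_pos (neg_pos.mpr hy) (neg_pos.mpr hy)) (neg_pos.mpr hz),
    mul_pos (mul_pos (neg_pos.mpr hx) (neg_pos.mpr hz)) (neg_pos.mpr hz),
    mul_pos (mul_pos (neg_pos.mpr hy) (neg_pos.mpr hz)) (neg_pos.mpr hz)]

/-- If `r₀ ∈ (r_e, r_c)`, `θ ∈ (0, π)`, and the covector
`ξ = (ξ_t, ξ_r, ξ_φ, ξ_θ)` satisfies both `q(r₀, θ, ξ) = 0` and the T-orthogonality
condition `ξ_t + (a/(r₀²+a²))ξ_φ = 0`, then `ξ = 0`: the T-orthogonal characteristic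
set of the Kerr–de Sitter wave operator does not meet the hypersurface `{r = r₀}`. -/
theorem characteristic_set_avoids_r0
    (Λ m a rm rC re rc : ℝ) (hΛ : 0 < Λ) (hm : 0 < m)
    (μ : ℝ → ℝ)
    (hμ : ∀ r, μ r = -(Λ/3)*r^4 + (1 - Λ*a^2/3)*r^2 - 2*m*r + a^2)
    (hord : rm < rC ∧ rC < re ∧ re < rc)
    (hroots : ∀ r, μ r = -(Λ/3)*(r - rm)*(r - rC)*(r - re)*(r - rc))
    (b : ℝ) (hb : b = 1 + Λ*a^2/3)
    (c : ℝ → ℝ) (hc : ∀ θ, c θ = 1 + Λ*a^2/3*(cos θ)^2)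
    (q : ℝ → ℝ → ℝ → ℝ → ℝ → ℝ → ℝ)
    (hq : ∀ r θ ξt ξr ξφ ξθ, q r θ ξt ξr ξφ ξθ
      = μ r*ξr^2 + (b^2/(c θ*(sin θ)^2))*(a*(sin θ)^2*ξt + ξφ)^2
        - (b^2/μ r)*((r^2 + a^2)*ξt + a*ξφ)^2 + c θ*ξθ^2)
    (r₀ : ℝ) (hr₀ : re < r₀ ∧ r₀ < rc)
    (θ ξt ξr ξφ ξθ : ℝ) (hθ : 0 < θ ∧ θ < π)
    (hchar : q r₀ θ ξt ξr ξφ ξθ = 0)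
    (horth : ξt + (a/(r₀^2 + a^2))*ξφ = 0) :
    ξt = 0 ∧ ξr = 0 ∧ ξφ = 0 ∧ ξθ = 0 := by
  obtain ⟨ho1, ho2, ho3⟩ := hord
  obtain ⟨hre, hrc⟩ := hr₀
  obtain ⟨hθ1, hθ2⟩ := hθ
  have hsin : 0 < sin θ := Real.sin_pos_of_pos_of_lt_pi hθ1 hθ2
  have ha2 : 0 ≤ Λ * a^2 := mul_nonneg hΛ.le (sq_nonneg a)
  have hbpos : 0 < b := by
    rw [hb]; linarith
  have hcθ : 0 < c θ := by
    rw [hc]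
    linarith [mul_nonneg ha2 (sq_nonneg (cos θ))]
  -- μ r₀ > 0
  have hμ0 : 0 < μ r₀ := by
    rw [hroots]
    have p1 : 0 < r₀ - rm := by linarith
    have p2 : 0 < r₀ - rC := by linarith
    have p3 : 0 < r₀ - re := by linarith
    have p4 : 0 < rc - r₀ := by linarith
    have hP : 0 < Λ/3 * ((r₀ - rm) * (r₀ - rC) * (r₀ - re) * (rc - r₀)) :=
      mul_pos (by linarith) (mul_pos (mul_pos (mul_pos p1 p2) p3) p4)
    linarith [hP]
  -- r₀ > 0
  have hr0pos : 0 < r₀ := by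
    by_contra hcon
    push_neg at hcon
    have hreneg : re < 0 := lt_of_lt_of_le hre hcon
    have heq : ∀ r : ℝ, -(Λ/3)*r^4 + (1 - Λ*a^2/3)*r^2 - 2*m*r + a^2
        = -(Λ/3)*(r - rm)*(r - rC)*(r - re)*(r - rc) :=
      fun r => (hμ r).symm.trans (hroots r)
    have hσ1 : Λ/3*(rm + rC + re + rc) = 0 := by
      linear_combination (-1/12)*heq 2 + (1/12)*heq (-2) + (1/6)*heq 1 + (-1/6)*heq (-1)
    have hsum : rm + rC + re + rc = 0 := by
      rcases mul_eq_zero.mp hσ1 with h | h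
      · exfalso; linarith
      · exact h
    have hσ3 : Λ/3*(rm*rC*re + rm*rC*rc + rm*re*rc + rC*re*rc) = -(2*m) := by
      linear_combination (-2/3)*heq 1 + (2/3)*heq (-1) + (1/12)*heq 2 + (-1/12)*heq (-2)
    have hσ3neg : rm*rC*re + rm*rC*rc + rm*re*rc + rC*re*rc < 0 := by
      by_contra hpos
      push_neg at hpos
      linarith [mul_nonneg (by linarith : (0:ℝ) ≤ Λ/3) hpos]
    have hσ3' : rm*rC*re + rm*rC*rc + rm*re*rc + rC*re*rc
        = rm*rC*re - (rm*rC + rm*re + rC*re)*(rm + rC + re) := by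
      linear_combination (rm*rC + rm*re + rC*re) * hsum
    have hkey : 0 < rm*rC*re - (rm*rC + rm*re + rC*re)*(rm + rC + re) :=
      kds_cubic_pos rm rC re (by linarith) (by linarith) hreneg
    rw [hσ3'] at hσ3neg
    linarith
  -- orthogonality in cleared form
  have hne : r₀^2 + a^2 ≠ 0 := by positivity
  have hA : (r₀^2 + a^2)*ξt + a*ξφ = 0 := by
    field_simp at horth
    linear_combination horth
  -- reduce the characteristic equation
  rw [hq, hA] at hchar
  have key : μ r₀*ξr^2 + (b^2/(c θ*(sin θ)^2))*(a*(sin θ)^2*ξt + ξφ)^2 + c θ*ξθ^2 = 0 := by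
    linear_combination hchar
  have hK : 0 < b^2/(c θ*(sin θ)^2) :=
    div_pos (pow_pos hbpos 2) (mul_pos hcθ (pow_pos hsin 2))
  have n1 : 0 ≤ μ r₀*ξr^2 := mul_nonneg hμ0.le (sq_nonneg _)
  have n2 : 0 ≤ (b^2/(c θ*(sin θ)^2))*(a*(sin θ)^2*ξt + ξφ)^2 := mul_nonneg hK.le (sq_nonneg _)
  have n3 : 0 ≤ c θ*ξθ^2 := mul_nonneg hcθ.le (sq_nonneg _)
  have hξr : ξr = 0 := by
    have h1 : μ r₀*ξr^2 = 0 := by linarith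
    have h2 : ξr^2 = 0 := by
      rcases mul_eq_zero.mp h1 with h | h
      · exact absurd h (ne_of_gt hμ0)
      · exact h
    exact pow_eq_zero_iff two_ne_zero |>.mp h2
  have hmid : a*(sin θ)^2*ξt + ξφ = 0 := by
    have h1 : (b^2/(c θ*(sin θ)^2))*(a*(sin θ)^2*ξt + ξφ)^2 = 0 := by linarith
    have h2 : (a*(sin θ)^2*ξt + ξφ)^2 = 0 := by
      rcases mul_eq_zero.mp h1 with h | h
      · exact absurd h (ne_of_gt hK)
      · exact h
    exact pow_eq_zero_iff two_ne_zero |>.mp h2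
  have hξθ : ξθ = 0 := by
    have h1 : c θ*ξθ^2 = 0 := by linarith
    have h2 : ξθ^2 = 0 := by
      rcases mul_eq_zero.mp h1 with h | h
      · exact absurd h (ne_of_gt hcθ)
      · exact h
    exact pow_eq_zero_iff two_ne_zero |>.mp h2
  have hcoef : 0 < r₀^2 + a^2 - a^2*(sin θ)^2 := by
    have hsc : r₀^2 + a^2 - a^2*(sin θ)^2 = r₀^2 + (a*cos θ)^2 := by
      linear_combination (-a^2) * Real.sin_sq_add_cos_sq θ
    rw [hsc]
    exact add_pos_of_pos_of_nonneg (pow_pos hr0pos 2) (sq_nonneg _)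
  have hξt : ξt = 0 := by
    have h : (r₀^2 + a^2 - a^2*(sin θ)^2)*ξt = 0 := by
      linear_combination hA - a*hmid
    rcases mul_eq_zero.mp h with h' | h'
    · exact absurd h' (ne_of_gt hcoef)
    · exact h'
  have hξφ : ξφ = 0 := by
    linear_combination hmid - a*(sin θ)^2*hξt
  exact ⟨hξt, hξr, hξφ, hξθ⟩
end

section
/- Escape function: let r₀ ∈ [r_e, r_c] and let ε > 0 with r_e + ε < r_c − ε. There exists C > 0 such that, for the function E(r, ξ_r) = e^{C(r−r₀)²}·2μ(r)ξ_r, at every point (r, θ, ξ) with r ∈ [r_e + ε, r_c − ε], θ ∈ (0, π), q(r, θ, ξ) = 0, ξ ≠ 0, and ξ_t + (a/(r₀²+a²))ξ_φ = 0, one has r ≠ r₀ and the derivative of E along the Hamiltonian vector field of q, H_q E = e^{C(r−r₀)²}(2C(r−r₀)(2μ(r)ξ_r)² + H_q(2μ(r)ξ_r)), is nonzero with the same sign as r − r₀. -/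
/-!
On the covectors with `ξ_t + a ξ_φ/(r₀² + a²) = 0` one has `(r² + a²)ξ_t + aξ_φ = (r² − r₀²)ξ_t`,
so `q = 0` reads `μ²ξ_r² + μY = b²(r² − r₀²)²ξ_t²`, where `Y ≥ 0` is the angular part of `q`.
Substituting this into `H_q(2μξ_r)` gives
`(r² − r₀²) μ H_q(2μξ_r) = 8rμ³ξ_r² + 2μY (4rμ − (r² − r₀²)μ')`.
The trapping factor `4rμ − (r² − r₀²)μ' = −(r² − r₀²)³ ∂_r(μ/(r² − r₀²)²)` is positive for
`r_e < r < r_c`: it is affine in `r₀²`, and at `r₀ = r_e` and `r₀ = r_c` it factors through the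
roots of `μ`, which sum to zero. Hence `(r − r₀) H_q(2μξ_r) > 0` unless `ξ = 0`, and the weight
`e^{C(r − r₀)²}` only adds `2C(r − r₀)²(2μξ_r)² ≥ 0`, so every `C > 0` works.
-/

open Real

section HamiltonianVectorField

variable (q : ℝ → ℝ → ℝ → ℝ → ℝ) (u : ℝ → ℝ → ℝ) (r θ ξr ξθ : ℝ)

theorem hamVF_radial :
    HamVF q (fun r' _ ξr' _ => u r' ξr') r θ ξr ξθ
      = deriv (fun s => q r θ s ξθ) ξr * deriv (fun s => u s ξr) r
        - deriv (fun s => q s θ ξr ξθ) r * deriv (fun s => u r s) ξr := by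
  simp only [HamVF, deriv_const', mul_zero, add_zero, sub_zero]

theorem hamVF_mul_radial {g : ℝ → ℝ} {g' : ℝ} (hg : HasDerivAt g g' r)
    (hu : DifferentiableAt ℝ (fun s => u s ξr) r) :
    HamVF q (fun r' _ ξr' _ => g r' * u r' ξr') r θ ξr ξθ
      = g r * HamVF q (fun r' _ ξr' _ => u r' ξr') r θ ξr ξθ
        + g' * u r ξr * deriv (fun s => q r θ s ξθ) ξr := by
  rw [hamVF_radial, hamVF_radial q u, deriv_const_mul_field,
    deriv_fun_mul hg.differentiableAt hu, hg.deriv]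
  ring

end HamiltonianVectorField

namespace KerrDeSitter

def quartic (κ r₁ r₂ r₃ r₄ x : ℝ) : ℝ := -κ*(x - r₁)*(x - r₂)*(x - r₃)*(x - r₄)

def quarticDeriv (κ r₁ r₂ r₃ r₄ x : ℝ) : ℝ :=
  -κ*((x - r₂)*(x - r₃)*(x - r₄) + (x - r₁)*(x - r₃)*(x - r₄)
    + (x - r₁)*(x - r₂)*(x - r₄) + (x - r₁)*(x - r₂)*(x - r₃))

theorem hasDerivAt_quartic (κ r₁ r₂ r₃ r₄ x : ℝ) :
    HasDerivAt (quartic κ r₁ r₂ r₃ r₄) (quarticDeriv κ r₁ r₂ r₃ r₄ x) x := by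
  have h : ∀ r : ℝ, HasDerivAt (fun y : ℝ => y - r) 1 x := fun r => (hasDerivAt_id x).sub_const r
  exact ((((h r₁).const_mul (-κ)).fun_mul (h r₂)).fun_mul (h r₃)).fun_mul (h r₄) |>.congr_deriv
    (by unfold quarticDeriv; ring)

theorem quartic_pos {κ r₁ r₂ r₃ r₄ x : ℝ} (hκ : 0 < κ) (h₁ : r₁ < x) (h₂ : r₂ < x)
    (h₃ : r₃ < x) (h₄ : x < r₄) : 0 < quartic κ r₁ r₂ r₃ r₄ x := by
  have := mul_pos (mul_pos (mul_pos (mul_pos hκ (sub_pos.2 h₁)) (sub_pos.2 h₂)) (sub_pos.2 h₃))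
    (sub_pos.2 h₄)
  unfold quartic; linarith

theorem sum_roots_eq_zero {κ β m α r₁ r₂ r₃ r₄ : ℝ} (hκ : κ ≠ 0)
    (h : ∀ x, -κ*x^4 + β*x^2 - 2*m*x + α = quartic κ r₁ r₂ r₃ r₄ x) : r₁ + r₂ + r₃ + r₄ = 0 := by
  have : κ*(r₁ + r₂ + r₃ + r₄) = 0 := by
    unfold quartic at h
    linear_combination (-(1:ℝ)/12)*(h 2 - h (-2) - 2*(h 1) + 2*(h (-1)))
  exact (mul_eq_zero.1 this).resolve_left hκ

theorem roots_nonneg {κ β m α r₁ r₂ r₃ r₄ : ℝ}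
    (h : ∀ x, -κ*x^4 + β*x^2 - 2*m*x + α = quartic κ r₁ r₂ r₃ r₄ x) (hκ : 0 < κ) (hm : 0 < m)
    (hα : 0 ≤ α) (h₁₂ : r₁ < r₂) (h₂₃ : r₂ < r₃) (h₃₄ : r₃ < r₄) : 0 ≤ r₂ ∧ 0 < r₃ := by
  have hsum := sum_roots_eq_zero hκ.ne' h
  unfold quartic at h
  have he₃ : κ*(r₁*r₂*r₃ + r₁*r₂*r₄ + r₁*r₃*r₄ + r₂*r₃*r₄) = -(2*m) := by
    linear_combination (-(1:ℝ)/12)*(8*(h 1 - h (-1)) - (h 2 - h (-2)))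
  have he₄ : α = -κ*(r₁*r₂*r₃*r₄) := by linear_combination h 0
  have hr₁ : r₁ < 0 := by linarith
  have hr₄ : 0 < r₄ := by linarith
  have hr₃ : 0 < r₃ := by
    by_contra! hr₃
    have h₁ : 0 < -(r₁ + r₂) := by linarith
    have h₂ : 0 < -(r₂ + r₃) := by linarith
    have h₃ : 0 < -(r₁ + r₃) := by linarith
    have hfac : r₁*r₂*r₃ + r₁*r₂*r₄ + r₁*r₃*r₄ + r₂*r₃*r₄ = -((r₁ + r₂)*(r₂ + r₃)*(r₁ + r₃)) := by
      linear_combination (r₁*r₂ + r₁*r₃ + r₂*r₃)*hsum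
    nlinarith [mul_pos (mul_pos h₁ h₂) h₃]
  refine ⟨?_, hr₃⟩
  by_contra! hr₂
  nlinarith [mul_pos hκ (mul_pos (mul_pos (mul_pos_of_neg_of_neg hr₁ hr₂) hr₃) hr₄)]

theorem trapping_pos_at_outer {κ r₁ r₂ r₃ r₄ r : ℝ} (hκ : 0 < κ) (h₁ : r₁ < r) (h₂ : r₂ < r)
    (hr₃ : 0 < r₃) (h₃ : r₃ < r) (h₄ : r < r₄) :
    0 < 4*r*quartic κ r₁ r₂ r₃ r₄ r - (r^2 - r₄^2)*quarticDeriv κ r₁ r₂ r₃ r₄ r := by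
  have hP : 0 < (r - r₁)*(r - r₂) := mul_pos (by linarith) (by linarith)
  have hB : 0 < (3*r - r₄)*(r - r₃) + r₄^2 - r^2 := by nlinarith
  have hB' : 0 ≤ (r₄^2 - r^2)*((r - r₃)*(2*r - r₁ - r₂)) :=
    mul_nonneg (by nlinarith) (mul_nonneg (by linarith) (by linarith))
  have key : 4*r*quartic κ r₁ r₂ r₃ r₄ r - (r^2 - r₄^2)*quarticDeriv κ r₁ r₂ r₃ r₄ r
      = κ*(r₄ - r)*(((3*r - r₄)*(r - r₃) + r₄^2 - r^2)*((r - r₁)*(r - r₂))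
        + (r₄^2 - r^2)*((r - r₃)*(2*r - r₁ - r₂))) := by
    unfold quartic quarticDeriv; ring
  rw [key]
  exact mul_pos (mul_pos hκ (by linarith)) (by positivity)

theorem trapping_pos_at_inner {κ r₁ r₂ r₃ r₄ r : ℝ} (hκ : 0 < κ) (h₁ : r₁ < r)
    (hr₂ : 0 ≤ r₂) (h₂₃ : r₂ < r₃) (h₃ : r₃ < r) (h₄ : r < r₄)
    (hsum : r₁ + r₂ + r₃ + r₄ = 0) :
    0 < 4*r*quartic κ r₁ r₂ r₃ r₄ r - (r^2 - r₃^2)*quarticDeriv κ r₁ r₂ r₃ r₄ r := by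
  have key : 4*r*quartic κ r₁ r₂ r₃ r₄ r - (r^2 - r₃^2)*quarticDeriv κ r₁ r₂ r₃ r₄ r
      = κ*(r - r₃)*(2*(r - r₃)*(r₄ - r)*(r - r₂)*(r - r₁)
        + (r + r₃)*(r - r₁)*(r₄ - r)*(r₃ - r₂) + (r + r₃)*(r - r₃)*(r - r₂)*(2*r + r₂ + r₃)) := by
    unfold quartic quarticDeriv
    linear_combination (κ*(-(r^4) + r₃*r^3 + r₃^2*r^2 - r₃^3*r + r₂*r^3 - r₂*r₃*r^2
      - r₂*r₃^2*r + r₂*r₃^3))*hsum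
  rw [key]
  have h₁ : 0 < r - r₁ := by linarith
  have h₂ : 0 < r - r₂ := by linarith
  have h₃' : 0 < r - r₃ := by linarith
  have h₄' : 0 < r₄ - r := by linarith
  have h₂₃' : 0 < r₃ - r₂ := by linarith
  have hs : 0 < r + r₃ := by linarith
  have hs' : 0 < 2*r + r₂ + r₃ := by linarith
  positivity

theorem trapping_pos {κ r₁ r₂ r₃ r₄ r r₀ : ℝ} (hκ : 0 < κ) (h₁₂ : r₁ < r₂) (hr₂ : 0 ≤ r₂)
    (h₂₃ : r₂ < r₃) (h₃ : r₃ < r) (h₄ : r < r₄) (hsum : r₁ + r₂ + r₃ + r₄ = 0)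
    (hr₀ : r₃ ≤ r₀) (hr₀' : r₀ ≤ r₄) :
    0 < 4*r*quartic κ r₁ r₂ r₃ r₄ r - (r^2 - r₀^2)*quarticDeriv κ r₁ r₂ r₃ r₄ r := by
  have outer := trapping_pos_at_outer hκ (h₁₂.trans (h₂₃.trans h₃)) (h₂₃.trans h₃)
    (hr₂.trans_lt h₂₃) h₃ h₄
  have inner := trapping_pos_at_inner hκ (h₁₂.trans (h₂₃.trans h₃)) hr₂ h₂₃ h₃ h₄ hsum
  have hsq : r₃^2 ≤ r₀^2 ∧ r₀^2 ≤ r₄^2 :=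
    ⟨pow_le_pow_left₀ (by linarith) hr₀ 2, pow_le_pow_left₀ (by linarith) hr₀' 2⟩
  rcases le_total (quarticDeriv κ r₁ r₂ r₃ r₄ r) 0 with hD | hD
  · nlinarith [mul_nonneg (sub_nonneg.2 hsq.2) (neg_nonneg.2 hD)]
  · nlinarith [mul_nonneg (sub_nonneg.2 hsq.1) hD]

theorem sub_mul_escape_derivative_pos {μr μ' Y b G ξr ξt r r₀ C : ℝ} (hμ : 0 < μr) (hY : 0 ≤ Y)
    (hC : 0 ≤ C) (hr : 0 < r) (hr₀ : 0 ≤ r₀) (htrap : 0 < 4*r*μr - (r^2 - r₀^2)*μ')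
    (hG : G = (r^2 - r₀^2)*ξt) (hnull : μr^2*ξr^2 + μr*Y = b^2*G^2) (hnd : ξr ≠ 0 ∨ Y ≠ 0) :
    0 < (r - r₀)*(2*C*(r - r₀)*(2*μr*ξr)^2 + (2*μr*ξr*(2*μ'*ξr)
      - (μ'*ξr^2 - b^2*(2*G*(2*r*ξt)*μr - G^2*μ')/μr^2)*(2*μr))) := by
  have key : (r + r₀)*μr*((r - r₀)*(2*C*(r - r₀)*(2*μr*ξr)^2 + (2*μr*ξr*(2*μ'*ξr)
      - (μ'*ξr^2 - b^2*(2*G*(2*r*ξt)*μr - G^2*μ')/μr^2)*(2*μr))))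
      = 8*C*(r - r₀)^2*(r + r₀)*μr^3*ξr^2 + 8*r*μr^3*ξr^2
        + 2*(4*r*μr - (r^2 - r₀^2)*μ')*(μr*Y) := by
    subst hG
    field_simp
    linear_combination (-2*(4*r*μr - (r^2 - r₀^2)*μ'))*hnull
  have hpos : 0 < 8*C*(r - r₀)^2*(r + r₀)*μr^3*ξr^2 + 8*r*μr^3*ξr^2
      + 2*(4*r*μr - (r^2 - r₀^2)*μ')*(μr*Y) := by
    rcases hnd with hξr | hY'
    · have : 0 < 8*r*μr^3*ξr^2 := by positivity
      positivity
    · have : 0 < Y := hY.lt_of_ne' hY'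
      have : 0 < 2*(4*r*μr - (r^2 - r₀^2)*μ')*(μr*Y) := by positivity
      positivity
  exact pos_of_mul_pos_right (key ▸ hpos) (by positivity)

noncomputable section

def angular (c : ℝ → ℝ) (a b θ ξt ξφ ξθ : ℝ) : ℝ :=
  (b^2/(c θ*(sin θ)^2))*(a*(sin θ)^2*ξt + ξφ)^2 + c θ*ξθ^2

def hamiltonian (μ c : ℝ → ℝ) (a b r θ ξt ξr ξφ ξθ : ℝ) : ℝ :=
  μ r*ξr^2 + angular c a b θ ξt ξφ ξθ - (b^2/μ r)*((r^2 + a^2)*ξt + a*ξφ)^2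

section Hamiltonian

variable {μ c : ℝ → ℝ} {a b r θ ξt ξr ξφ ξθ : ℝ}

theorem angular_nonneg (hc : 0 ≤ c θ) : 0 ≤ angular c a b θ ξt ξφ ξθ := by
  unfold angular; positivity

theorem angular_eq_zero (hc : 0 < c θ) (hsin : sin θ ≠ 0) (hb : b ≠ 0)
    (h : angular c a b θ ξt ξφ ξθ = 0) : a*(sin θ)^2*ξt + ξφ = 0 ∧ ξθ = 0 := by
  unfold angular at h
  rw [add_eq_zero_iff_of_nonneg (by positivity) (by positivity)] at h
  have hcoef : b^2/(c θ*(sin θ)^2) ≠ 0 := by positivity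
  exact ⟨pow_eq_zero_iff two_ne_zero |>.1 ((mul_eq_zero.1 h.1).resolve_left hcoef),
    pow_eq_zero_iff two_ne_zero |>.1 ((mul_eq_zero.1 h.2).resolve_left hc.ne')⟩

theorem hamiltonian_eq_zero_iff (hμ : μ r ≠ 0) :
    hamiltonian μ c a b r θ ξt ξr ξφ ξθ = 0 ↔
      μ r^2*ξr^2 + μ r*angular c a b θ ξt ξφ ξθ = b^2*((r^2 + a^2)*ξt + a*ξφ)^2 := by
  unfold hamiltonian
  constructor <;> intro h
  · field_simp at h; linear_combination h
  · field_simp; linear_combination h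

theorem eq_zero_of_null_of_angular_eq_zero (hr : r ≠ 0) (hc : 0 < c θ) (hsin : sin θ ≠ 0)
    (hb : b ≠ 0)
    (hnull : μ r^2*ξr^2 + μ r*angular c a b θ ξt ξφ ξθ = b^2*((r^2 + a^2)*ξt + a*ξφ)^2)
    (hξr : ξr = 0) (hY : angular c a b θ ξt ξφ ξθ = 0) : ξt = 0 ∧ ξφ = 0 ∧ ξθ = 0 := by
  obtain ⟨hφ, hθ⟩ := angular_eq_zero hc hsin hb hY
  rw [hξr, hY] at hnull
  have hG : (r^2 + a^2)*ξt + a*ξφ = 0 := by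
    have : b^2*((r^2 + a^2)*ξt + a*ξφ)^2 = 0 := by linear_combination -hnull
    exact pow_eq_zero_iff two_ne_zero |>.1 ((mul_eq_zero.1 this).resolve_left (by positivity))
  -- with `ξ_φ = -a sin²θ ξ_t`, the quantity `(r² + a²)ξ_t + aξ_φ` becomes `(r² + a² cos²θ)ξ_t`
  have hξt : (r^2 + (a*cos θ)^2)*ξt = 0 := by
    linear_combination hG - a*hφ + a^2*ξt*sin_sq_add_cos_sq θ
  have ht : ξt = 0 := (mul_eq_zero.1 hξt).resolve_left (by positivity)
  exact ⟨ht, by linear_combination hφ - a*(sin θ)^2*ht, hθ⟩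

theorem deriv_hamiltonian_momentum :
    deriv (fun s => hamiltonian μ c a b r θ ξt s ξφ ξθ) ξr = 2*μ r*ξr := by
  unfold hamiltonian
  simp only [deriv_add_const, deriv_sub_const, deriv_const_mul_field', deriv_pow_field]
  ring

theorem deriv_hamiltonian_radius {μ' : ℝ} (hμ : HasDerivAt μ μ' r) (hμr : μ r ≠ 0) :
    deriv (fun s => hamiltonian μ c a b s θ ξt ξr ξφ ξθ) r
      = μ'*ξr^2 - b^2*(2*((r^2 + a^2)*ξt + a*ξφ)*(2*r*ξt)*μ r
          - ((r^2 + a^2)*ξt + a*ξφ)^2*μ')/μ r^2 := by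
  have hG : HasDerivAt (fun s : ℝ => (s^2 + a^2)*ξt + a*ξφ) (2*r*ξt) r :=
    (((hasDerivAt_pow 2 r).add_const (a^2)).mul_const ξt).add_const (a*ξφ) |>.congr_deriv
      (by push_cast; ring)
  have h := ((hμ.mul_const (ξr^2)).add_const (angular c a b θ ξt ξφ ξθ)).fun_sub
    (((hG.fun_pow 2).const_mul (b^2)).fun_div hμ hμr)
  unfold hamiltonian
  convert h.deriv using 1
  · congr 1; funext s; ring
  · field_simp; ring

theorem hamVF_hamiltonian_radial_momentum {μ' : ℝ} (hμ : HasDerivAt μ μ' r) (hμr : μ r ≠ 0) :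
    HamVF (fun r' θ' ξr' ξθ' => hamiltonian μ c a b r' θ' ξt ξr' ξφ ξθ')
        (fun r' _ ξr' _ => 2*μ r'*ξr') r θ ξr ξθ
      = 2*μ r*ξr*(2*μ'*ξr) - (μ'*ξr^2 - b^2*(2*((r^2 + a^2)*ξt + a*ξφ)*(2*r*ξt)*μ r
          - ((r^2 + a^2)*ξt + a*ξφ)^2*μ')/μ r^2)*(2*μ r) := by
  rw [hamVF_radial _ (fun r' ξr' => 2*μ r'*ξr'), deriv_hamiltonian_momentum,
    deriv_hamiltonian_radius hμ hμr, ((hμ.const_mul 2).mul_const ξr).deriv,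
    deriv_const_mul_field, deriv_id'', mul_one]

theorem hamVF_hamiltonian_exp_mul (C r₀ : ℝ) (hμ : DifferentiableAt ℝ μ r) :
    HamVF (fun r' θ' ξr' ξθ' => hamiltonian μ c a b r' θ' ξt ξr' ξφ ξθ')
        (fun r' _ ξr' _ => exp (C*(r' - r₀)^2)*(2*μ r'*ξr')) r θ ξr ξθ
      = exp (C*(r - r₀)^2)*(2*C*(r - r₀)*(2*μ r*ξr)^2
        + HamVF (fun r' θ' ξr' ξθ' => hamiltonian μ c a b r' θ' ξt ξr' ξφ ξθ')
            (fun r' _ ξr' _ => 2*μ r'*ξr') r θ ξr ξθ) := by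
  have hg : HasDerivAt (fun s => exp (C*(s - r₀)^2)) (exp (C*(r - r₀)^2)*(2*C*(r - r₀))) r :=
    ((((hasDerivAt_id r).sub_const r₀).pow 2).const_mul C).exp.congr_deriv (by simp; ring)
  rw [hamVF_mul_radial _ (fun r' ξr' => 2*μ r'*ξr') r θ ξr ξθ hg (by fun_prop),
    deriv_hamiltonian_momentum]
  ring

end Hamiltonian

end

end KerrDeSitter

open KerrDeSitter

theorem escape_function_general
    (Λ m a rm rC re rc : ℝ) (hΛ : 0 < Λ) (hm : 0 < m)
    (μ : ℝ → ℝ)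
    (hμ : ∀ r, μ r = -(Λ/3)*r^4 + (1 - Λ*a^2/3)*r^2 - 2*m*r + a^2)
    (hord : rm < rC ∧ rC < re ∧ re < rc)
    (hroots : ∀ r, μ r = -(Λ/3)*(r - rm)*(r - rC)*(r - re)*(r - rc))
    (b : ℝ) (hb : b = 1 + Λ*a^2/3)
    (c : ℝ → ℝ) (hc : ∀ θ, c θ = 1 + Λ*a^2/3*(cos θ)^2)
    (r₀ : ℝ) (hr₀ : re ≤ r₀ ∧ r₀ ≤ rc)
    (q : ℝ → ℝ → ℝ → ℝ → ℝ → ℝ → ℝ)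
    (hq : ∀ r θ ξt ξr ξφ ξθ, q r θ ξt ξr ξφ ξθ
      = μ r*ξr^2 + (b^2/(c θ*(sin θ)^2))*(a*(sin θ)^2*ξt + ξφ)^2
        - (b^2/μ r)*((r^2 + a^2)*ξt + a*ξφ)^2 + c θ*ξθ^2)
    (ε : ℝ) (hε : 0 < ε) :
    ∃ C > (0:ℝ), ∀ r θ ξt ξr ξφ ξθ : ℝ,
      re + ε ≤ r → r ≤ rc - ε → 0 < θ → θ < π →
      q r θ ξt ξr ξφ ξθ = 0 →
      (ξt, ξr, ξφ, ξθ) ≠ ((0:ℝ), (0:ℝ), (0:ℝ), (0:ℝ)) →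
      ξt + (a/(r₀^2 + a^2))*ξφ = 0 →
      let qf : ℝ → ℝ → ℝ → ℝ → ℝ := fun r' θ' ξr' ξθ' => q r' θ' ξt ξr' ξφ ξθ'
      let E : ℝ → ℝ → ℝ → ℝ → ℝ := fun r' _ ξr' _ => exp (C*(r' - r₀)^2)*(2*μ r'*ξr')
      let HqE : ℝ := HamVF qf E r θ ξr ξθ
      r ≠ r₀ ∧
      HqE = exp (C*(r - r₀)^2)*(2*C*(r - r₀)*(2*μ r*ξr)^2
        + HamVF qf (fun r' _ ξr' _ => 2*μ r'*ξr') r θ ξr ξθ) ∧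
      (r < r₀ → HqE < 0) ∧ (r₀ < r → 0 < HqE) := by
  obtain ⟨h₁₂, h₂₃, h₃₄⟩ := hord
  have hΛ3 : 0 < Λ/3 := by positivity
  have hμq : μ = quartic (Λ/3) rm rC re rc := funext hroots
  have hpoly : ∀ x, -(Λ/3)*x^4 + (1 - Λ*a^2/3)*x^2 - 2*m*x + a^2 = quartic (Λ/3) rm rC re rc x :=
    fun x => (hμ x).symm.trans (hroots x)
  have hsum := sum_roots_eq_zero hΛ3.ne' hpoly
  obtain ⟨hrC, hre⟩ := roots_nonneg hpoly hΛ3 hm (sq_nonneg a) h₁₂ h₂₃ h₃₄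
  obtain rfl : q = fun r θ ξt ξr ξφ ξθ => hamiltonian μ c a b r θ ξt ξr ξφ ξθ := by
    funext r θ ξt ξr ξφ ξθ; rw [hq, hamiltonian, angular]; ring
  refine ⟨1, one_pos, fun r θ ξt ξr ξφ ξθ hr hr' hθ hθ' hnull hξ hcon => ?_⟩
  dsimp only
  have hμr : 0 < μ r :=
    hμq ▸ quartic_pos hΛ3 (by linarith) (by linarith) (by linarith) (by linarith)
  have hμ' : HasDerivAt μ (quarticDeriv (Λ/3) rm rC re rc r) r := hμq ▸ hasDerivAt_quartic ..
  have hcθ : 0 < c θ := by rw [hc]; positivity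
  have hbpos : 0 < b := by rw [hb]; positivity
  rw [hamiltonian_eq_zero_iff hμr.ne'] at hnull
  have hr₀a : r₀^2 + a^2 ≠ 0 := by nlinarith
  have hG : (r^2 + a^2)*ξt + a*ξφ = (r^2 - r₀^2)*ξt := by
    field_simp at hcon; linear_combination hcon
  have hnd : ξr ≠ 0 ∨ angular c a b θ ξt ξφ ξθ ≠ 0 := by
    by_contra! h
    obtain ⟨ht, hφ, hθ⟩ := eq_zero_of_null_of_angular_eq_zero (by linarith : 0 < r).ne' hcθ
      (sin_pos_of_pos_of_lt_pi hθ hθ').ne' hbpos.ne' hnull h.1 h.2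
    exact hξ (by rw [ht, h.1, hφ, hθ])
  have htrap := hμq ▸ trapping_pos (r := r) hΛ3 h₁₂ hrC h₂₃ (by linarith) (by linarith) hsum
    hr₀.1 hr₀.2
  have hpos := sub_mul_escape_derivative_pos hμr (angular_nonneg hcθ.le) zero_le_one
    (by linarith) (by linarith) htrap hG hnull hnd
  rw [hamVF_hamiltonian_exp_mul 1 r₀ hμ'.differentiableAt,
    hamVF_hamiltonian_radial_momentum hμ' hμr.ne']
  refine ⟨fun h => by simp [h] at hpos, rfl, fun h => ?_, fun h => ?_⟩
  · exact mul_neg_of_pos_of_neg (exp_pos _) (neg_of_mul_pos_right hpos (by linarith))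
  · exact mul_pos (exp_pos _) (pos_of_mul_pos_right hpos (by linarith))

/-- **escape function.** Let `r₀ ∈ [r_e, r_c]` and `ε > 0` with
`r_e + ε < r_c − ε`. There exists `C > 0` such that for
`E(r,ξ_r) = e^{C(r−r₀)²}·2μ(r)ξ_r`, at every point with `r ∈ [r_e+ε, r_c−ε]`,
`θ ∈ (0,π)`, `q = 0`, `ξ ≠ 0`, and `ξ_t + (a/(r₀²+a²))ξ_φ = 0`, one has `r ≠ r₀` and
`H_q E = e^{C(r−r₀)²}(2C(r−r₀)(2μ(r)ξ_r)² + H_q(2μ(r)ξ_r))` is nonzero with the same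
sign as `r − r₀`. -/
theorem escape_function
    (Λ m a rm rC re rc : ℝ) (hΛ : 0 < Λ) (hm : 0 < m)
    (μ : ℝ → ℝ)
    (hμ : ∀ r, μ r = -(Λ/3)*r^4 + (1 - Λ*a^2/3)*r^2 - 2*m*r + a^2)
    (hord : rm < rC ∧ rC < re ∧ re < rc)
    (hroots : ∀ r, μ r = -(Λ/3)*(r - rm)*(r - rC)*(r - re)*(r - rc))
    (b : ℝ) (hb : b = 1 + Λ*a^2/3)
    (c : ℝ → ℝ) (hc : ∀ θ, c θ = 1 + Λ*a^2/3*(cos θ)^2)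
    (r₀ : ℝ) (hr₀ : re ≤ r₀ ∧ r₀ ≤ rc)
    (q : ℝ → ℝ → ℝ → ℝ → ℝ → ℝ → ℝ)
    (hq : ∀ r θ ξt ξr ξφ ξθ, q r θ ξt ξr ξφ ξθ
      = μ r*ξr^2 + (b^2/(c θ*(sin θ)^2))*(a*(sin θ)^2*ξt + ξφ)^2
        - (b^2/μ r)*((r^2 + a^2)*ξt + a*ξφ)^2 + c θ*ξθ^2)
    (ε : ℝ) (hε : 0 < ε) (hεlt : re + ε < rc - ε) :
    ∃ C > (0:ℝ), ∀ r θ ξt ξr ξφ ξθ : ℝ,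
      re + ε ≤ r → r ≤ rc - ε → 0 < θ → θ < π →
      q r θ ξt ξr ξφ ξθ = 0 →
      (ξt, ξr, ξφ, ξθ) ≠ ((0:ℝ), (0:ℝ), (0:ℝ), (0:ℝ)) →
      ξt + (a/(r₀^2 + a^2))*ξφ = 0 →
      let qf : ℝ → ℝ → ℝ → ℝ → ℝ := fun r' θ' ξr' ξθ' => q r' θ' ξt ξr' ξφ ξθ'
      let E : ℝ → ℝ → ℝ → ℝ → ℝ := fun r' _ ξr' _ => exp (C*(r' - r₀)^2)*(2*μ r'*ξr')
      let HqE : ℝ := HamVF qf E r θ ξr ξθ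
      r ≠ r₀ ∧
      HqE = exp (C*(r - r₀)^2)*(2*C*(r - r₀)*(2*μ r*ξr)^2
        + HamVF qf (fun r' _ ξr' _ => 2*μ r'*ξr') r θ ξr ξθ) ∧
      (r < r₀ → HqE < 0) ∧ (r₀ < r → 0 < HqE) :=
  escape_function_general Λ m a rm rC re rc hΛ hm μ hμ hord hroots b hb c hc r₀ hr₀ q hq ε hε
end

section
/- No trapping of T-orthogonal bicharacteristics: let r₀ ∈ [r_e, r_c] and ε > 0. There is no curve x : ℝ → (r_e, r_c) × (0, π) × ℝ⁴, x(s) = (r(s), θ(s), ξ_t(s), ξ_r(s), ξ_φ(s), ξ_θ(s)), solving Hamilton's equations for q (namely r' = ∂_{ξ_r}q, θ' = ∂_{ξ_θ}q, ξ_t' = 0, ξ_φ' = 0, ξ_r' = −∂_r q, ξ_θ' = −∂_θ q) for all s ∈ ℝ, such that q(x(0)) = 0, (ξ_t, ξ_r, ξ_φ, ξ_θ)(0) ≠ 0, ξ_t(0) + (a/(r₀²+a²))ξ_φ(0) = 0, and r(s) ∈ [r_e + ε, r_c − ε] for all s ∈ ℝ. That is, every lightlike bicharacteristic orthogonal to the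 Killing field T = ∂_t + (a/(r₀²+a²))∂_φ eventually leaves the region r_e + ε ≤ r ≤ r_c − ε. -/
/-!
Since `q` does not depend on `t, φ`, the momenta `ξ_t = T`, `ξ_φ = F` are constant, and
T-orthogonality reads `a F = -(r₀² + a²) T`, so `(r² + a²) ξ_t + a ξ_φ = T (r² - r₀²)`. Then `q`
separates into a radial part `μ ξ_r² - b² T² (r² - r₀²)² / μ` and a nonnegative angular part, and
stays `0` along the flow. Hence `T ≠ 0` (otherwise the covector vanishes), and `r` never reaches
`r₀` (there `a sin²θ T + F = 0`, contradicting `a F = -(r₀² + a²) T`), so `r² - r₀²` has a fixed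
sign. The rescaled momentum `p = √μ ξ_r` satisfies
`p' = √μ b² T² (r² - r₀²) (4 r μ - (r² - r₀²) μ') / μ²`, and `4 r μ - (r² - r₀²) μ' > 0` on
`[r_e, r_c]`, so `p` is strictly monotone. As `r' = 2 √μ p` with `√μ` bounded below on the band,
`r` is unbounded in one of the two time directions.
-/

open Real Set

theorem eq_of_hasDerivAt_zero {u : ℝ → ℝ} (hu : ∀ s, HasDerivAt u 0 s) (s : ℝ) : u s = u 0 :=
  is_const_of_deriv_eq_zero (fun t => (hu t).differentiableAt) (fun t => (hu t).deriv) s 0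

theorem continuous_pos_or_neg {u : ℝ → ℝ} (hu : Continuous u) (hu0 : ∀ s, u s ≠ 0) :
    (∀ s, 0 < u s) ∨ (∀ s, u s < 0) := by
  by_contra! h
  obtain ⟨⟨s₁, hs₁⟩, s₂, hs₂⟩ := h
  obtain ⟨s, hs⟩ := intermediate_value_univ s₁ s₂ hu ⟨hs₁, hs₂⟩
  exact hu0 s hs

section Escape

variable {x v P : ℝ → ℝ} {v₀ : ℝ}

theorem not_bddAbove_range_of_hasDerivAt_mul_of_monotone {s₁ : ℝ} (hv₀ : 0 < v₀)
    (hv : ∀ s, v₀ ≤ v s) (hx : ∀ s, HasDerivAt x (v s * P s) s) (hP : Monotone P)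
    (hs₁ : 0 < P s₁) : ¬ BddAbove (range x) := by
  rintro ⟨M, hM⟩
  have hη : 0 < v₀ * P s₁ := mul_pos hv₀ hs₁
  set t := s₁ + (M - x s₁ + 1) / (v₀ * P s₁)
  have hxM : x s₁ ≤ M := hM (mem_range_self _)
  have hst : s₁ < t := lt_add_of_pos_right _ (div_pos (by linarith) hη)
  obtain ⟨c, hc, hslope⟩ := exists_hasDerivAt_eq_slope x (fun s => v s * P s) hst
    (fun s _ => (hx s).continuousAt.continuousWithinAt) (fun s _ => hx s)
  have hgrowth : v₀ * P s₁ ≤ v c * P c :=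
    mul_le_mul (hv c) (hP hc.1.le) hs₁.le (hv₀.trans_le (hv c)).le
  rw [hslope, le_div_iff₀ (sub_pos.2 hst)] at hgrowth
  have ht : v₀ * P s₁ * (t - s₁) = M - x s₁ + 1 := by
    simp only [t, add_sub_cancel_left]
    field_simp
  linarith [hM (mem_range_self t)]

theorem not_bddAbove_range_of_hasDerivAt_mul_of_strictMono (hv₀ : 0 < v₀)
    (hv : ∀ s, v₀ ≤ v s) (hx : ∀ s, HasDerivAt x (v s * P s) s) (hP : StrictMono P) :
    ¬ BddAbove (range x) := by
  by_cases hpos : ∃ s₁, 0 < P s₁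
  · obtain ⟨s₁, hs₁⟩ := hpos
    exact not_bddAbove_range_of_hasDerivAt_mul_of_monotone hv₀ hv hx hP.monotone hs₁
  -- otherwise reverse time: `s ↦ x (-s)` solves the same kind of equation with `s ↦ -P (-s)`
  push Not at hpos
  have hrev s : HasDerivAt (fun t => x (-t)) (v (-s) * -P (-s)) s := by
    refine ((hx (-s)).scomp s (hasDerivAt_neg s)).congr_deriv ?_
    rw [smul_eq_mul]
    ring
  have hs₁ : 0 < -P (-1) := neg_pos.2 ((hP (by norm_num : (-1 : ℝ) < 0)).trans_le (hpos 0))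
  have h := not_bddAbove_range_of_hasDerivAt_mul_of_monotone hv₀ (fun s => hv (-s)) hrev
    (fun a b hab => neg_le_neg (hP.monotone (neg_le_neg hab))) (s₁ := 1) (by simpa using hs₁)
  rwa [show range (fun t => x (-t)) = range x from (Equiv.neg ℝ).surjective.range_comp x] at h

theorem not_bddBelow_and_bddAbove_range_of_hasDerivAt_mul (hv₀ : 0 < v₀)
    (hv : ∀ s, v₀ ≤ v s) (hx : ∀ s, HasDerivAt x (v s * P s) s)
    (hP : StrictMono P ∨ StrictAnti P) : ¬ (BddBelow (range x) ∧ BddAbove (range x)) := by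
  rintro ⟨⟨M, hM⟩, habove⟩
  rcases hP with hP | hP
  · exact not_bddAbove_range_of_hasDerivAt_mul_of_strictMono hv₀ hv hx hP habove
  · refine not_bddAbove_range_of_hasDerivAt_mul_of_strictMono hv₀ hv
      (fun s => (hx s).neg.congr_deriv (mul_neg _ _).symm) hP.neg ⟨-M, ?_⟩
    rintro _ ⟨s, rfl⟩
    exact neg_le_neg (hM (mem_range_self s))

end Escape

section QuadraticHamiltonian

variable {f g x ξ : ℝ → ℝ} {s : ℝ}

theorem hasDerivAt_energy_of_hamilton (hf : DifferentiableAt ℝ f (x s))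
    (hg : DifferentiableAt ℝ g (x s)) (hx : HasDerivAt x (2 * f (x s) * ξ s) s)
    (hξ : HasDerivAt ξ (-(deriv f (x s) * ξ s ^ 2 + deriv g (x s))) s) :
    HasDerivAt (fun t => f (x t) * ξ t ^ 2 + g (x t)) 0 s := by
  refine (((hf.hasDerivAt.comp s hx).mul (hξ.pow 2)).add
    (hg.hasDerivAt.comp s hx)).congr_deriv ?_
  simp only [Function.comp_apply, Pi.pow_apply]
  push_cast
  ring

theorem hasDerivAt_sqrt_mul_of_hamilton (hpos : 0 < f (x s)) (hf : DifferentiableAt ℝ f (x s))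
    (hx : HasDerivAt x (2 * f (x s) * ξ s) s)
    (hξ : HasDerivAt ξ (-(deriv f (x s) * ξ s ^ 2 + deriv g (x s))) s) :
    HasDerivAt (fun t => √(f (x t)) * ξ t) (-(√(f (x s)) * deriv g (x s))) s := by
  refine (((hf.hasDerivAt.comp s hx).sqrt hpos.ne').mul hξ).congr_deriv ?_
  have hS : √(f (x s)) ≠ 0 := (sqrt_pos.2 hpos).ne'
  simp only [Function.comp_apply]
  field_simp
  rw [sq_sqrt hpos.le]
  ring

end QuadraticHamiltonian

section SeparableHamiltonian

variable {f g h k : ℝ → ℝ} {Q : ℝ → ℝ → ℝ → ℝ → ℝ} {x y ξ η : ℝ → ℝ} {s : ℝ}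

theorem hasDerivAt_fst_of_separable
    (hQ : ∀ x y ξ η, Q x y ξ η = f x * ξ ^ 2 + g x + (h y * η ^ 2 + k y))
    (hx : HasDerivAt x (deriv (fun z => Q (x s) (y s) z (η s)) (ξ s)) s) :
    HasDerivAt x (2 * f (x s) * ξ s) s := by
  refine hx.congr_deriv ?_
  simp only [hQ]
  rw [deriv_add_const, (((hasDerivAt_pow 2 _).const_mul _).add_const _).deriv]
  ring

theorem hasDerivAt_snd_of_separable
    (hQ : ∀ x y ξ η, Q x y ξ η = f x * ξ ^ 2 + g x + (h y * η ^ 2 + k y))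
    (hy : HasDerivAt y (deriv (fun z => Q (x s) (y s) (ξ s) z) (η s)) s) :
    HasDerivAt y (2 * h (y s) * η s) s := by
  refine hy.congr_deriv ?_
  simp only [hQ]
  rw [deriv_const_add, (((hasDerivAt_pow 2 _).const_mul _).add_const _).deriv]
  ring

theorem hasDerivAt_fst_momentum_of_separable
    (hQ : ∀ x y ξ η, Q x y ξ η = f x * ξ ^ 2 + g x + (h y * η ^ 2 + k y))
    (hf : DifferentiableAt ℝ f (x s)) (hg : DifferentiableAt ℝ g (x s))
    (hξ : HasDerivAt ξ (-deriv (fun z => Q z (y s) (ξ s) (η s)) (x s)) s) :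
    HasDerivAt ξ (-(deriv f (x s) * ξ s ^ 2 + deriv g (x s))) s := by
  refine hξ.congr_deriv ?_
  simp only [hQ]
  rw [deriv_add_const]
  exact congrArg _ ((hf.hasDerivAt.mul_const _).add hg.hasDerivAt).deriv

theorem hasDerivAt_snd_momentum_of_separable
    (hQ : ∀ x y ξ η, Q x y ξ η = f x * ξ ^ 2 + g x + (h y * η ^ 2 + k y))
    (hh : DifferentiableAt ℝ h (y s)) (hk : DifferentiableAt ℝ k (y s))
    (hη : HasDerivAt η (-deriv (fun z => Q (x s) z (ξ s) (η s)) (y s)) s) :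
    HasDerivAt η (-(deriv h (y s) * η s ^ 2 + deriv k (y s))) s := by
  refine hη.congr_deriv ?_
  simp only [hQ]
  rw [deriv_const_add]
  exact congrArg _ ((hh.hasDerivAt.mul_const _).add hk.hasDerivAt).deriv

theorem separable_hamiltonian_eq_of_hamilton
    (hQ : ∀ x y ξ η, Q x y ξ η = f x * ξ ^ 2 + g x + (h y * η ^ 2 + k y))
    (hf : ∀ s, DifferentiableAt ℝ f (x s)) (hg : ∀ s, DifferentiableAt ℝ g (x s))
    (hh : ∀ s, DifferentiableAt ℝ h (y s)) (hk : ∀ s, DifferentiableAt ℝ k (y s))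
    (hx : ∀ s, HasDerivAt x (deriv (fun z => Q (x s) (y s) z (η s)) (ξ s)) s)
    (hy : ∀ s, HasDerivAt y (deriv (fun z => Q (x s) (y s) (ξ s) z) (η s)) s)
    (hξ : ∀ s, HasDerivAt ξ (-deriv (fun z => Q z (y s) (ξ s) (η s)) (x s)) s)
    (hη : ∀ s, HasDerivAt η (-deriv (fun z => Q (x s) z (ξ s) (η s)) (y s)) s) (s : ℝ) :
    Q (x s) (y s) (ξ s) (η s) = Q (x 0) (y 0) (ξ 0) (η 0) := by
  simp only [hQ]
  refine eq_of_hasDerivAt_zero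
    (u := fun t => f (x t) * ξ t ^ 2 + g (x t) + (h (y t) * η t ^ 2 + k (y t))) (fun t => ?_) s
  simpa using
    (hasDerivAt_energy_of_hamilton (hf t) (hg t) (hasDerivAt_fst_of_separable hQ (hx t))
      (hasDerivAt_fst_momentum_of_separable hQ (hf t) (hg t) (hξ t))).fun_add
    (hasDerivAt_energy_of_hamilton (hh t) (hk t) (hasDerivAt_snd_of_separable hQ (hy t))
      (hasDerivAt_snd_momentum_of_separable hQ (hh t) (hk t) (hη t)))

end SeparableHamiltonian

theorem inner_root_pair_pos {rm rC re rc x t : ℝ} (hsum : rm + rC + re + rc = 0)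
    (hord : rm < rC ∧ rC < re ∧ re < rc) (hre : 0 < re) (hx : x ∈ Icc re rc)
    (ht : t ∈ Icc re rc) :
    0 < (x - rC) * (t ^ 2 - x * rm) + (x - rm) * (t ^ 2 - x * rC) := by
  obtain ⟨hmC, hCe, hec⟩ := hord
  obtain ⟨hx₁, hx₂⟩ := hx
  obtain ⟨ht₁, ht₂⟩ := ht
  obtain rfl : rm = -(rC + re + rc) := by linarith
  have h₁ : 0 < 2 * x * ((re - rC) * (2 * re + rC + rc)) :=
    mul_pos (by linarith) (mul_pos (by linarith) (by linarith))
  have h₂ : 0 ≤ (re + rc) * (x - re) ^ 2 := mul_nonneg (by linarith) (sq_nonneg _)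
  have h₃ : 0 ≤ ((t - re) * (t + re)) * (re + rc + 2 * x) :=
    mul_nonneg (mul_nonneg (by linarith) (by linarith)) (by linarith)
  nlinarith

theorem outer_root_pair_nonpos {re rc x t : ℝ} (hre : 0 < re) (hec : re < rc)
    (hx : x ∈ Icc re rc) (ht : t ∈ Icc re rc) :
    (x - rc) * (t ^ 2 - x * re) + (x - re) * (t ^ 2 - x * rc) ≤ 0 := by
  obtain ⟨hx₁, hx₂⟩ := hx
  obtain ⟨ht₁, ht₂⟩ := ht
  have h₁ : 0 ≤ ((rc - t) * (rc + t)) * ((re + rc) * (x - re) ^ 2) :=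
    mul_nonneg (mul_nonneg (by linarith) (by linarith)) (mul_nonneg (by linarith) (sq_nonneg _))
  have h₂ : 0 ≤ ((t - re) * (t + re)) * ((re + rc) * (x - rc) ^ 2) :=
    mul_nonneg (mul_nonneg (by linarith) (by linarith)) (mul_nonneg (by linarith) (sq_nonneg _))
  have h₃ : 0 < rc ^ 2 - re ^ 2 := by nlinarith
  nlinarith

section RadialPolynomial

variable {Λ m a rm rC re rc : ℝ} {μ : ℝ → ℝ}

theorem sum_roots_eq_zero (hΛ : Λ ≠ 0)
    (hμ : ∀ r, μ r = -(Λ/3)*r^4 + (1 - Λ*a^2/3)*r^2 - 2*m*r + a^2)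
    (hroots : ∀ r, μ r = -(Λ/3)*(r - rm)*(r - rC)*(r - re)*(r - rc)) :
    rm + rC + re + rc = 0 := by
  have h r := (hμ r).symm.trans (hroots r)
  -- the cubic coefficient, read off from the values at `±1`, `±2`
  have hcubic : Λ / 3 * (rm + rC + re + rc) = 0 := by
    linear_combination (1/6) * h 1 - (1/6) * h (-1) - (1/12) * h 2 + (1/12) * h (-2)
  simpa [hΛ] using hcubic

theorem radial_pos_of_mem_Ioo (hΛ : 0 < Λ)
    (hroots : ∀ r, μ r = -(Λ/3)*(r - rm)*(r - rC)*(r - re)*(r - rc))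
    (hord : rm < rC ∧ rC < re ∧ re < rc) {r : ℝ} (hr : r ∈ Ioo re rc) : 0 < μ r := by
  obtain ⟨hmC, hCe, -⟩ := hord
  obtain ⟨hr₁, hr₂⟩ := hr
  rw [show μ r = Λ / 3 * ((r - rm) * (r - rC) * (r - re) * (rc - r)) by rw [hroots]; ring]
  exact mul_pos (by positivity) (mul_pos (mul_pos (mul_pos (by linarith) (by linarith))
    (by linarith)) (by linarith))

theorem zero_lt_re (hΛ : 0 < Λ) (hm : 0 < m)
    (hμ : ∀ r, μ r = -(Λ/3)*r^4 + (1 - Λ*a^2/3)*r^2 - 2*m*r + a^2)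
    (hroots : ∀ r, μ r = -(Λ/3)*(r - rm)*(r - rC)*(r - re)*(r - rc))
    (hord : rm < rC ∧ rC < re ∧ re < rc) : 0 < re := by
  by_contra! hre
  have hsum := sum_roots_eq_zero hΛ.ne' hμ hroots
  -- `μ (-r) = μ r + 4 m r`, so `μ (-rC) < 0` for the root `rC < 0`, yet `-rC ∈ (re, rc)`
  have hreflect : μ (-rC) = μ rC + 4 * m * rC := by rw [hμ, hμ]; ring
  have hrC : μ rC = 0 := by rw [hroots]; ring
  have hmem : -rC ∈ Ioo re rc := ⟨by linarith [hord.1], by linarith [hord.1]⟩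
  have := radial_pos_of_mem_Ioo hΛ hroots hord hmem
  nlinarith [hord.2.1]

theorem hasDerivAt_radial_of_roots
    (hroots : ∀ r, μ r = -(Λ/3)*(r - rm)*(r - rC)*(r - re)*(r - rc)) (r : ℝ) :
    HasDerivAt μ (-(Λ/3) * ((r - rC)*(r - re)*(r - rc) + (r - rm)*(r - re)*(r - rc)
      + (r - rm)*(r - rC)*(r - rc) + (r - rm)*(r - rC)*(r - re))) r := by
  rw [show μ = _ from funext hroots]
  have hlin (ρ : ℝ) : HasDerivAt (fun r : ℝ => r - ρ) 1 r := (hasDerivAt_id r).sub_const ρ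
  refine (((((hlin rm).const_mul (-(Λ/3))).mul (hlin rC)).mul (hlin re)).mul
    (hlin rc)).congr_deriv ?_
  simp only [Pi.mul_apply]
  ring

theorem escape_weight_pos (hΛ : 0 < Λ)
    (hroots : ∀ r, μ r = -(Λ/3)*(r - rm)*(r - rC)*(r - re)*(r - rc))
    (hsum : rm + rC + re + rc = 0) (hord : rm < rC ∧ rC < re ∧ re < rc) (hre : 0 < re)
    {r r₀ μ' : ℝ} (hr : r ∈ Ioo re rc) (hr₀ : r₀ ∈ Icc re rc) (hμ' : HasDerivAt μ μ' r) :
    0 < 4 * r * μ r - (r ^ 2 - r₀ ^ 2) * μ' := by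
  rw [hμ'.unique (hasDerivAt_radial_of_roots hroots r)]
  -- `4 r μ - (r² - r₀²) μ' = -(Λ/3) ∑ᵢ (r₀² - r rᵢ) ∏_{j ≠ i} (r - rⱼ)`, grouped in two pairs
  have hsplit : 4 * r * μ r - (r ^ 2 - r₀ ^ 2) * (-(Λ/3) * ((r - rC)*(r - re)*(r - rc)
      + (r - rm)*(r - re)*(r - rc) + (r - rm)*(r - rC)*(r - rc) + (r - rm)*(r - rC)*(r - re)))
      = Λ / 3 * ((r - re) * (rc - r)) *
          ((r - rC) * (r₀ ^ 2 - r * rm) + (r - rm) * (r₀ ^ 2 - r * rC))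
        + Λ / 3 * ((r - rm) * (r - rC)) *
          -((r - rc) * (r₀ ^ 2 - r * re) + (r - re) * (r₀ ^ 2 - r * rc)) := by
    rw [hroots]; ring
  have hinner := inner_root_pair_pos hsum hord hre (Ioo_subset_Icc_self hr) hr₀
  have houter := outer_root_pair_nonpos hre hord.2.2 (Ioo_subset_Icc_self hr) hr₀
  obtain ⟨hr₁, hr₂⟩ := hr
  obtain ⟨hmC, hCe, -⟩ := hord
  rw [hsplit]
  refine add_pos_of_pos_of_nonneg (mul_pos (mul_pos (by positivity) ?_) hinner)
    (mul_nonneg (mul_nonneg (by positivity) ?_) (by linarith))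
  · exact mul_pos (by linarith) (by linarith)
  · exact mul_nonneg (by linarith) (by linarith)

end RadialPolynomial

theorem hasDerivAt_radial_potential {μ : ℝ → ℝ} {μ' r r₀ κ : ℝ} (hμ' : HasDerivAt μ μ' r)
    (hμr : μ r ≠ 0) :
    HasDerivAt (fun y => -κ ^ 2 * ((y ^ 2 - r₀ ^ 2) ^ 2 / μ y))
      (-κ ^ 2 * ((r ^ 2 - r₀ ^ 2) * (4 * r * μ r - (r ^ 2 - r₀ ^ 2) * μ') / μ r ^ 2)) r := by
  refine ((((hasDerivAt_pow 2 r).sub_const (r₀ ^ 2)).pow 2).div hμ' hμr).const_mul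
    (-κ ^ 2) |>.congr_deriv ?_
  simp only [Pi.pow_apply]
  push_cast
  ring

theorem not_trapped_of_radial_hamilton {Λ rm rC re rc r₀ ε κ : ℝ} {μ : ℝ → ℝ} (hΛ : 0 < Λ)
    (hroots : ∀ r, μ r = -(Λ/3)*(r - rm)*(r - rC)*(r - re)*(r - rc))
    (hsum : rm + rC + re + rc = 0) (hord : rm < rC ∧ rC < re ∧ re < rc) (hre : 0 < re)
    (hr₀ : r₀ ∈ Icc re rc) (hε : 0 < ε) (hκ : κ ≠ 0) {x ξ : ℝ → ℝ}
    (hx : ∀ s, HasDerivAt x (2 * μ (x s) * ξ s) s)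
    (hξ : ∀ s, HasDerivAt ξ (-(deriv μ (x s) * ξ s ^ 2
      + deriv (fun y => -κ ^ 2 * ((y ^ 2 - r₀ ^ 2) ^ 2 / μ y)) (x s))) s)
    (hturn : ∀ s, x s ^ 2 ≠ r₀ ^ 2) (hband : ∀ s, x s ∈ Icc (re + ε) (rc - ε)) : False := by
  have hbandIoo : Icc (re + ε) (rc - ε) ⊆ Ioo re rc := Icc_subset_Ioo (by linarith) (by linarith)
  have hμ : Differentiable ℝ μ := fun r => (hasDerivAt_radial_of_roots hroots r).differentiableAt
  have hμpos s : 0 < μ (x s) := radial_pos_of_mem_Ioo hΛ hroots hord (hbandIoo (hband s))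
  have hweight s : 0 < √(μ (x s)) * κ ^ 2 *
      (4 * x s * μ (x s) - (x s ^ 2 - r₀ ^ 2) * deriv μ (x s)) / μ (x s) ^ 2 := by
    have := hμpos s
    have := escape_weight_pos hΛ hroots hsum hord hre (hbandIoo (hband s)) hr₀ (hμ _).hasDerivAt
    positivity
  have hp s : HasDerivAt (fun t => √(μ (x t)) * ξ t) (√(μ (x s)) * κ ^ 2 *
      (4 * x s * μ (x s) - (x s ^ 2 - r₀ ^ 2) * deriv μ (x s)) / μ (x s) ^ 2
        * (x s ^ 2 - r₀ ^ 2)) s := by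
    have h := hasDerivAt_sqrt_mul_of_hamilton (hμpos s) (hμ _) (hx s) (hξ s)
    rw [(hasDerivAt_radial_potential (hμ _).hasDerivAt (hμpos s).ne').deriv] at h
    exact h.congr_deriv (by ring)
  have hmono : StrictMono (fun t => √(μ (x t)) * ξ t) ∨ StrictAnti (fun t => √(μ (x t)) * ξ t) := by
    have hcont : Continuous (fun s => x s ^ 2 - r₀ ^ 2) :=
      ((continuous_iff_continuousAt.2 fun s => (hx s).continuousAt).pow 2).sub continuous_const
    rcases continuous_pos_or_neg hcont (fun s => sub_ne_zero.2 (hturn s)) with hu | hu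
    · exact .inl (strictMono_of_hasDerivAt_pos hp fun s => mul_pos (hweight s) (hu s))
    · exact .inr (strictAnti_of_hasDerivAt_neg hp fun s => mul_neg_of_pos_of_neg (hweight s) (hu s))
  have hx' s : HasDerivAt x (2 * √(μ (x s)) * (√(μ (x s)) * ξ s)) s :=
    (hx s).congr_deriv (by linear_combination (-2 * ξ s) * mul_self_sqrt (hμpos s).le)
  obtain ⟨r₁, hr₁, hmin⟩ := isCompact_Icc.exists_isMinOn ⟨x 0, hband 0⟩ hμ.continuous.continuousOn
  have hv₀ : 0 < 2 * √(μ r₁) :=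
    mul_pos two_pos (sqrt_pos.2 (radial_pos_of_mem_Ioo hΛ hroots hord (hbandIoo hr₁)))
  have hv s : 2 * √(μ r₁) ≤ 2 * √(μ (x s)) :=
    mul_le_mul_of_nonneg_left (sqrt_le_sqrt (hmin (hband s))) zero_le_two
  refine not_bddBelow_and_bddAbove_range_of_hasDerivAt_mul hv₀ hv hx' hmono
    ⟨⟨re + ε, ?_⟩, ⟨rc - ε, ?_⟩⟩
  · rintro _ ⟨s, rfl⟩; exact (hband s).1
  · rintro _ ⟨s, rfl⟩; exact (hband s).2

section KerrDeSitter

variable {μ c : ℝ → ℝ} {q : ℝ → ℝ → ℝ → ℝ → ℝ → ℝ → ℝ} {a b r₀ T F : ℝ}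

theorem kerrDeSitter_separation
    (hq : ∀ r θ ξt ξr ξφ ξθ, q r θ ξt ξr ξφ ξθ
      = μ r*ξr^2 + (b^2/(c θ*(sin θ)^2))*(a*(sin θ)^2*ξt + ξφ)^2
        - (b^2/μ r)*((r^2 + a^2)*ξt + a*ξφ)^2 + c θ*ξθ^2)
    (haF : a * F = -((r₀ ^ 2 + a ^ 2) * T)) (x θ ξ η : ℝ) :
    q x θ T ξ F η = μ x * ξ ^ 2 + -(b * T) ^ 2 * ((x ^ 2 - r₀ ^ 2) ^ 2 / μ x)
      + (c θ * η ^ 2 + b ^ 2 * (a * sin θ ^ 2 * T + F) ^ 2 / (c θ * sin θ ^ 2)) := by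
  have hΦ : (x ^ 2 + a ^ 2) * T + a * F = T * (x ^ 2 - r₀ ^ 2) := by linear_combination haF
  rw [hq, hΦ]
  ring

theorem kerrDeSitter_hamiltonian_conserved {Λ : ℝ} {rr θθ Ξr Ξθ : ℝ → ℝ} (hΛ : 0 < Λ)
    (hq : ∀ r θ ξt ξr ξφ ξθ, q r θ ξt ξr ξφ ξθ
      = μ r*ξr^2 + (b^2/(c θ*(sin θ)^2))*(a*(sin θ)^2*ξt + ξφ)^2
        - (b^2/μ r)*((r^2 + a^2)*ξt + a*ξφ)^2 + c θ*ξθ^2)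
    (hc : ∀ θ, c θ = 1 + Λ*a^2/3*(cos θ)^2) (haF : a * F = -((r₀ ^ 2 + a ^ 2) * T))
    (hμ : Differentiable ℝ μ) (hμ0 : ∀ s, μ (rr s) ≠ 0) (hθ : ∀ s, 0 < θθ s ∧ θθ s < π)
    (hr' : ∀ s, HasDerivAt rr (deriv (fun x => q (rr s) (θθ s) T x F (Ξθ s)) (Ξr s)) s)
    (hθ' : ∀ s, HasDerivAt θθ (deriv (fun x => q (rr s) (θθ s) T (Ξr s) F x) (Ξθ s)) s)
    (hΞr : ∀ s, HasDerivAt Ξr (-deriv (fun x => q x (θθ s) T (Ξr s) F (Ξθ s)) (rr s)) s)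
    (hΞθ : ∀ s, HasDerivAt Ξθ (-deriv (fun x => q (rr s) x T (Ξr s) F (Ξθ s)) (θθ s)) s)
    (s : ℝ) : q (rr s) (θθ s) T (Ξr s) F (Ξθ s) = q (rr 0) (θθ 0) T (Ξr 0) F (Ξθ 0) := by
  have hcd : Differentiable ℝ c := by rw [show c = _ from funext hc]; fun_prop
  have hAd s : DifferentiableAt ℝ
      (fun θ => b ^ 2 * (a * sin θ ^ 2 * T + F) ^ 2 / (c θ * sin θ ^ 2)) (θθ s) := by
    have : c (θθ s) * sin (θθ s) ^ 2 ≠ 0 := (mul_pos (by rw [hc]; positivity)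
      (pow_pos (sin_pos_of_pos_of_lt_pi (hθ s).1 (hθ s).2) 2)).ne'
    fun_prop (disch := assumption)
  exact separable_hamiltonian_eq_of_hamilton (kerrDeSitter_separation hq haF) (fun _ => hμ _)
    (fun s => (hasDerivAt_radial_potential (hμ _).hasDerivAt (hμ0 s)).differentiableAt)
    (fun _ => hcd _) hAd hr' hθ' hΞr hΞθ s

theorem kerrDeSitter_eq_zero_of_null_of_turning {Λ x θ ξ η : ℝ} (hΛ : 0 < Λ)
    (hq : ∀ r θ ξt ξr ξφ ξθ, q r θ ξt ξr ξφ ξθ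
      = μ r*ξr^2 + (b^2/(c θ*(sin θ)^2))*(a*(sin θ)^2*ξt + ξφ)^2
        - (b^2/μ r)*((r^2 + a^2)*ξt + a*ξφ)^2 + c θ*ξθ^2)
    (hc : ∀ θ, c θ = 1 + Λ*a^2/3*(cos θ)^2) (haF : a * F = -((r₀ ^ 2 + a ^ 2) * T))
    (hb : b ≠ 0) (hμ : 0 < μ x) (hθ : 0 < θ ∧ θ < π) (hnull : q x θ T ξ F η = 0)
    (hturn : T * (x ^ 2 - r₀ ^ 2) = 0) : ξ = 0 ∧ η = 0 ∧ a * sin θ ^ 2 * T + F = 0 := by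
  have hcθ : 0 < c θ := by rw [hc]; positivity
  have hsin := sin_pos_of_pos_of_lt_pi hθ.1 hθ.2
  have hΦ : (x ^ 2 + a ^ 2) * T + a * F = 0 := by linear_combination haF + hturn
  rw [hq, hΦ, zero_pow two_ne_zero, mul_zero, sub_zero] at hnull
  have hξ₀ := mul_nonneg hμ.le (sq_nonneg ξ)
  have hη₀ := mul_nonneg hcθ.le (sq_nonneg η)
  have hφ : 0 ≤ b ^ 2 / (c θ * sin θ ^ 2) * (a * sin θ ^ 2 * T + F) ^ 2 :=
    mul_nonneg (div_nonneg (sq_nonneg b) (mul_pos hcθ (pow_pos hsin 2)).le) (sq_nonneg _)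
  refine ⟨?_, ?_, ?_⟩
  · simpa [hμ.ne'] using (by linarith : μ x * ξ ^ 2 = 0)
  · simpa [hcθ.ne'] using (by linarith : c θ * η ^ 2 = 0)
  · simpa [hb, hcθ.ne', hsin.ne'] using
      (by linarith : b ^ 2 / (c θ * sin θ ^ 2) * (a * sin θ ^ 2 * T + F) ^ 2 = 0)

theorem sin_sq_mul_add_ne_zero_of_T_orthogonal {θ : ℝ} (hr₀ : 0 < r₀) (hT : T ≠ 0)
    (haF : a * F = -((r₀ ^ 2 + a ^ 2) * T)) : a * sin θ ^ 2 * T + F ≠ 0 := by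
  intro h
  have : T * (r₀ ^ 2 + a ^ 2 * cos θ ^ 2) = 0 := by
    linear_combination -a * h + haF + a ^ 2 * T * sin_sq_add_cos_sq θ
  rcases mul_eq_zero.1 this with h | h
  · exact hT h
  · nlinarith [sq_nonneg (a * cos θ)]

end KerrDeSitter

/-- **no trapping of T-orthogonal bicharacteristics.** Let
`r₀ ∈ [r_e, r_c]` and `ε > 0`. There is no global solution
`s ↦ (r(s), θ(s), ξ_t(s), ξ_r(s), ξ_φ(s), ξ_θ(s))` of Hamilton's equations for the
rescaled dual metric Hamiltonian `q` (with `r' = ∂_{ξ_r}q`, `θ' = ∂_{ξ_θ}q`,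
`ξ_t' = 0`, `ξ_φ' = 0`, `ξ_r' = −∂_r q`, `ξ_θ' = −∂_θ q`), staying in the region
`(r_e, r_c) × (0, π)`, which is null (`q = 0` at `s = 0`) with nonzero covector,
T-orthogonal (`ξ_t(0) + (a/(r₀²+a²))ξ_φ(0) = 0`), and with
`r(s) ∈ [r_e+ε, r_c−ε]` for all `s`: every lightlike bicharacteristic orthogonal to
`T = ∂_t + (a/(r₀²+a²))∂_φ` eventually leaves the region `r_e+ε ≤ r ≤ r_c−ε`. -/
theorem no_trapping_T_orthogonal
    (Λ m a rm rC re rc : ℝ) (hΛ : 0 < Λ) (hm : 0 < m)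
    (μ : ℝ → ℝ)
    (hμ : ∀ r, μ r = -(Λ/3)*r^4 + (1 - Λ*a^2/3)*r^2 - 2*m*r + a^2)
    (hord : rm < rC ∧ rC < re ∧ re < rc)
    (hroots : ∀ r, μ r = -(Λ/3)*(r - rm)*(r - rC)*(r - re)*(r - rc))
    (b : ℝ) (hb : b = 1 + Λ*a^2/3)
    (c : ℝ → ℝ) (hc : ∀ θ, c θ = 1 + Λ*a^2/3*(cos θ)^2)
    (r₀ : ℝ) (hr₀ : re ≤ r₀ ∧ r₀ ≤ rc)
    (q : ℝ → ℝ → ℝ → ℝ → ℝ → ℝ → ℝ)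
    (hq : ∀ r θ ξt ξr ξφ ξθ, q r θ ξt ξr ξφ ξθ
      = μ r*ξr^2 + (b^2/(c θ*(sin θ)^2))*(a*(sin θ)^2*ξt + ξφ)^2
        - (b^2/μ r)*((r^2 + a^2)*ξt + a*ξφ)^2 + c θ*ξθ^2)
    (ε : ℝ) (hε : 0 < ε) :
    ¬ ∃ rr θθ Ξt Ξr Ξφ Ξθ : ℝ → ℝ,
      (∀ s, re < rr s ∧ rr s < rc) ∧
      (∀ s, 0 < θθ s ∧ θθ s < π) ∧
      (∀ s, HasDerivAt rr
        (deriv (fun x => q (rr s) (θθ s) (Ξt s) x (Ξφ s) (Ξθ s)) (Ξr s)) s) ∧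
      (∀ s, HasDerivAt θθ
        (deriv (fun x => q (rr s) (θθ s) (Ξt s) (Ξr s) (Ξφ s) x) (Ξθ s)) s) ∧
      (∀ s, HasDerivAt Ξt 0 s) ∧
      (∀ s, HasDerivAt Ξφ 0 s) ∧
      (∀ s, HasDerivAt Ξr
        (-(deriv (fun x => q x (θθ s) (Ξt s) (Ξr s) (Ξφ s) (Ξθ s)) (rr s))) s) ∧
      (∀ s, HasDerivAt Ξθ
        (-(deriv (fun x => q (rr s) x (Ξt s) (Ξr s) (Ξφ s) (Ξθ s)) (θθ s))) s) ∧
      q (rr 0) (θθ 0) (Ξt 0) (Ξr 0) (Ξφ 0) (Ξθ 0) = 0 ∧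
      (Ξt 0, Ξr 0, Ξφ 0, Ξθ 0) ≠ ((0:ℝ), (0:ℝ), (0:ℝ), (0:ℝ)) ∧
      Ξt 0 + (a/(r₀^2 + a^2))*Ξφ 0 = 0 ∧
      (∀ s, re + ε ≤ rr s ∧ rr s ≤ rc - ε) := by
  rintro ⟨rr, θθ, Ξt, Ξr, Ξφ, Ξθ, -, hθ, hr', hθ', hΞt, hΞφ, hΞr, hΞθ, hnull, hnz, horth, hband⟩
  have hsum := sum_roots_eq_zero hΛ.ne' hμ hroots
  have hre := zero_lt_re hΛ hm hμ hroots hord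
  have hr₀pos : 0 < r₀ := hre.trans_le hr₀.1
  obtain ⟨T, hT⟩ : ∃ T, ∀ s, Ξt s = T := ⟨_, eq_of_hasDerivAt_zero hΞt⟩
  obtain ⟨F, hF⟩ : ∃ F, ∀ s, Ξφ s = F := ⟨_, eq_of_hasDerivAt_zero hΞφ⟩
  simp only [hT, hF] at hr' hθ' hΞr hΞθ hnull hnz horth
  have haF : a * F = -((r₀ ^ 2 + a ^ 2) * T) := by
    have : r₀ ^ 2 + a ^ 2 ≠ 0 := by positivity
    field_simp at horth
    linear_combination horth
  have hsep := kerrDeSitter_separation hq haF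
  have hμd : Differentiable ℝ μ := fun r => (hasDerivAt_radial_of_roots hroots r).differentiableAt
  have hμpos s : 0 < μ (rr s) := radial_pos_of_mem_Ioo hΛ hroots hord
    ⟨by linarith [(hband s).1], by linarith [(hband s).2]⟩
  have hb0 : b ≠ 0 := by rw [hb]; positivity
  have hzero s := kerrDeSitter_eq_zero_of_null_of_turning hΛ hq hc haF hb0 (hμpos s) (hθ s)
    ((kerrDeSitter_hamiltonian_conserved hΛ hq hc haF hμd (fun s => (hμpos s).ne') hθ
      hr' hθ' hΞr hΞθ s).trans hnull)
  have hT0 : T ≠ 0 := by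
    rintro rfl
    obtain ⟨h₁, h₂, h₃⟩ := hzero 0 (zero_mul _)
    exact hnz (by rw [h₁, h₂, show F = 0 by simpa using h₃])
  exact not_trapped_of_radial_hamilton hΛ hroots hsum hord hre hr₀ hε (mul_ne_zero hb0 hT0)
    (fun s => hasDerivAt_fst_of_separable hsep (hr' s))
    (fun s => hasDerivAt_fst_momentum_of_separable hsep (hμd _)
      (hasDerivAt_radial_potential (hμd _).hasDerivAt (hμpos s).ne').differentiableAt (hΞr s))
    (fun s hs => sin_sq_mul_add_ne_zero_of_T_orthogonal hr₀pos hT0 haF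
      (hzero s (by rw [hs, sub_self, mul_zero])).2.2) hband
end
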